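/- arXiv:math/0608670 — 7 statements merged into one kernel-verified Lean document; each statement's English description precedes it below -/
import Mathlib

section
/- Suppose u(x,t) is smooth, 1-periodic in x, and satisfies ∂ₜ∂ₓ²u + u ∂ₓ³u + ((n−3)/(n−1)) ∂ₓu ∂ₓ²u = 0 with n ≥ 2, and let γ(x,t) be the flow of u, i.e. ∂ₜγ(x,t) = u(γ(x,t),t), γ(x,0) = x. Then (∂ₓ²u)(γ(x,t),t) · (∂ₓγ(x,t))^{(n−3)/(n−1)} = ∂ₓ²u(x,0), provided ∂ₓγ > 0. -/
open Real Filter Topology MeasureTheory Set intervalIntegral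

private lemma hasDerivAt_fst_dir {f : ℝ × ℝ → ℝ} (hf : Differentiable ℝ f) (x t : ℝ) :
    HasDerivAt (fun y => f (y, t)) (fderiv ℝ f (x, t) (1, 0)) x := by
  have h1 := (hf (x, t)).hasFDerivAt
  have h2 : HasDerivAt (fun y : ℝ => (y, t)) ((1 : ℝ), (0 : ℝ)) x :=
    (hasDerivAt_id x).prodMk (hasDerivAt_const x t)
  exact h1.comp_hasDerivAt x h2

private lemma hasDerivAt_comp_curve {f : ℝ × ℝ → ℝ} (hf : Differentiable ℝ f)
    {g : ℝ → ℝ} {g' t : ℝ} (hg : HasDerivAt g g' t) :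
    HasDerivAt (fun s => f (g s, s)) (fderiv ℝ f (g t, t) (g', 1)) t := by
  have h2 : HasDerivAt (fun s : ℝ => ((g s, s) : ℝ × ℝ)) ((g', 1) : ℝ × ℝ) t :=
    hg.prodMk (hasDerivAt_id t)
  exact HasFDerivAt.comp_hasDerivAt (x := t) (f := fun s : ℝ => ((g s, s) : ℝ × ℝ))
    (hf (g t, t)).hasFDerivAt h2

private lemma contDiff_pd {f : ℝ × ℝ → ℝ} (hf : ContDiff ℝ (⊤ : ℕ∞) f) :
    ContDiff ℝ (⊤ : ℕ∞) (fun p => fderiv ℝ f p (1, 0)) :=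
  (hf.fderiv_right (by simp)).clm_apply contDiff_const

private lemma dir_split (f : ℝ × ℝ → ℝ) (p : ℝ × ℝ) (v : ℝ) :
    fderiv ℝ f p (v, 1) = v * fderiv ℝ f p (1, 0) + fderiv ℝ f p (0, 1) := by
  have : ((v, 1) : ℝ × ℝ) = v • ((1 : ℝ), (0 : ℝ)) + ((0 : ℝ), (1 : ℝ)) := by
    simp [Prod.ext_iff]
  rw [this, map_add, ContinuousLinearMap.map_smul, smul_eq_mul]

private lemma periodic_of_hasDerivAt {f g : ℝ → ℝ}
    (hfg : ∀ y, HasDerivAt f (g y) y) (hf : ∀ y, f (y + 1) = f y) (y : ℝ) :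
    g (y + 1) = g y := by
  have e : (fun z => f (z + 1)) = f := funext hf
  rw [← (hfg (y + 1)).deriv, ← (hfg y).deriv, ← deriv_comp_add_const f 1 y, e]

private lemma periodic_bound {v : ℝ × ℝ → ℝ} (hv : Continuous v)
    (hp : ∀ y s, v (y + 1, s) = v (y, s)) (t₀ : ℝ) :
    ∃ C, 0 ≤ C ∧ ∀ y : ℝ, ∀ s ∈ Icc (0 : ℝ) t₀, |v (y, s)| ≤ C := by
  obtain ⟨C, hC⟩ := (isCompact_Icc.prod isCompact_Icc :
    IsCompact (Icc (0 : ℝ) 1 ×ˢ Icc (0 : ℝ) t₀)).exists_bound_of_continuousOn hv.continuousOn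
  refine ⟨max C 0, le_max_right _ _, fun y s hs => ?_⟩
  have hper : Function.Periodic (fun z => v (z, s)) 1 := fun z => hp z s
  have h1 : v (Int.fract y, s) = v (y, s) := by
    have h := hper.sub_int_mul_eq (x := y) ⌊y⌋
    simp only [mul_one] at h
    exact h
  have h2 : (Int.fract y, s) ∈ Icc (0 : ℝ) 1 ×ˢ Icc (0 : ℝ) t₀ :=
    ⟨⟨Int.fract_nonneg y, (Int.fract_lt_one y).le⟩, hs⟩
  calc |v (y, s)| = ‖v (Int.fract y, s)‖ := by rw [h1, Real.norm_eq_abs]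
    _ ≤ C := hC _ h2
    _ ≤ max C 0 := le_max_left _ _

private lemma mvt_abs {f g : ℝ → ℝ} {C : ℝ} (b c : ℝ)
    (hfg : ∀ z, HasDerivAt f (g z) z) (hb : ∀ z ∈ uIcc c b, |g z| ≤ C) :
    |f b - f c| ≤ C * |b - c| := by
  have := (convex_uIcc c b).norm_image_sub_le_of_norm_deriv_le
    (f := f) (fun z _ => (hfg z).differentiableAt)
    (fun z hz => by rw [Real.norm_eq_abs, (hfg z).deriv]; exact hb z hz)
    (left_mem_uIcc) (right_mem_uIcc)
  simpa [Real.norm_eq_abs] using this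

set_option maxHeartbeats 2000000 in
/-- If u is smooth, 1-periodic in x, satisfies
∂ₜ∂ₓ²u + u ∂ₓ³u + ((n−3)/(n−1)) ∂ₓu ∂ₓ²u = 0, and γ is the flow of u with
∂ₓγ > 0, then (∂ₓ²u)(γ(x,t),t) · (∂ₓγ(x,t))^{(n−3)/(n−1)} = ∂ₓ²u(x,0). -/
theorem second_derivative_transport
    (n : ℕ) (hn : 2 ≤ n) (T : ℝ) (hT : 0 < T)
    (u γ : ℝ → ℝ → ℝ)
    (hu : ContDiff ℝ (⊤ : ℕ∞) (fun z : ℝ × ℝ => u z.1 z.2))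
    (hper : ∀ x t, u (x + 1) t = u x t)
    (heq : ∀ x : ℝ, ∀ t ∈ Ico (0:ℝ) T,
      deriv (fun τ => deriv (deriv (fun y => u y τ)) x) t
        + u x t * deriv (deriv (deriv (fun y => u y t))) x
        + (((n : ℝ) - 3) / ((n : ℝ) - 1)) * deriv (fun y => u y t) x
            * deriv (deriv (fun y => u y t)) x = 0)
    (hγ0 : ∀ x, γ x 0 = x)
    (hflow : ∀ x : ℝ, ∀ t ∈ Ico (0:ℝ) T, HasDerivAt (fun τ => γ x τ) (u (γ x t) t) t)
    (hγx : ∀ t ∈ Ico (0:ℝ) T, ContDiff ℝ 1 (fun y => γ y t))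
    (hγpos : ∀ x : ℝ, ∀ t ∈ Ico (0:ℝ) T, 0 < deriv (fun y => γ y t) x) :
    ∀ x : ℝ, ∀ t ∈ Ico (0:ℝ) T,
      deriv (deriv (fun y => u y t)) (γ x t)
          * (deriv (fun y => γ y t) x) ^ ((((n : ℝ) - 3) / ((n : ℝ) - 1)) : ℝ)
        = deriv (deriv (fun y => u y 0)) x := by
  intro x t₀ ht₀
  obtain ⟨ht0, htT⟩ := ht₀
  set α : ℝ := ((n : ℝ) - 3) / ((n : ℝ) - 1) with hαdef
  set U : ℝ × ℝ → ℝ := fun p => u p.1 p.2 with hUdef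
  have hU : ContDiff ℝ (⊤ : ℕ∞) U := hu
  set U1 : ℝ × ℝ → ℝ := fun p => fderiv ℝ U p (1, 0) with hU1def
  have hU1 : ContDiff ℝ (⊤ : ℕ∞) U1 := contDiff_pd hU
  set U2 : ℝ × ℝ → ℝ := fun p => fderiv ℝ U1 p (1, 0) with hU2def
  have hU2 : ContDiff ℝ (⊤ : ℕ∞) U2 := contDiff_pd hU1
  set U3 : ℝ × ℝ → ℝ := fun p => fderiv ℝ U2 p (1, 0) with hU3def
  have hU3 : ContDiff ℝ (⊤ : ℕ∞) U3 := contDiff_pd hU2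
  -- identifications of iterated derivatives
  have idd1 : ∀ y t : ℝ, HasDerivAt (fun y => u y t) (U1 (y, t)) y := fun y t =>
    hasDerivAt_fst_dir (hU.differentiable (by simp)) y t
  have e1 : ∀ t : ℝ, deriv (fun y => u y t) = fun y => U1 (y, t) :=
    fun t => funext fun y => (idd1 y t).deriv
  have idd2 : ∀ y t : ℝ, HasDerivAt (fun y => U1 (y, t)) (U2 (y, t)) y := fun y t =>
    hasDerivAt_fst_dir (hU1.differentiable (by simp)) y t
  have e2 : ∀ t : ℝ, deriv (deriv (fun y => u y t)) = fun y => U2 (y, t) := by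
    intro t; rw [e1 t]; exact funext fun y => (idd2 y t).deriv
  have idd3 : ∀ y t : ℝ, HasDerivAt (fun y => U2 (y, t)) (U3 (y, t)) y := fun y t =>
    hasDerivAt_fst_dir (hU2.differentiable (by simp)) y t
  have e3 : ∀ t : ℝ, deriv (deriv (deriv (fun y => u y t))) = fun y => U3 (y, t) := by
    intro t; rw [e2 t]; exact funext fun y => (idd3 y t).deriv
  -- PDE in terms of U1, U2, U3
  have pde : ∀ y : ℝ, ∀ t ∈ Ico (0:ℝ) T,
      fderiv ℝ U2 (y, t) (0, 1) + u y t * U3 (y, t) + α * U1 (y, t) * U2 (y, t) = 0 := by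
    intro y t ht
    have h := heq y t ht
    have et : (fun τ => deriv (deriv (fun y' => u y' τ)) y) = fun τ => U2 (y, τ) := by
      funext τ; rw [e2 τ]
    rw [et] at h
    have hdt : HasDerivAt (fun τ => U2 (y, τ)) (fderiv ℝ U2 (y, t) (0, 1)) t := by
      have h1 := (hU2.differentiable (by simp) (y, t)).hasFDerivAt
      have h2 : HasDerivAt (fun τ : ℝ => (y, τ)) ((0 : ℝ), (1 : ℝ)) t :=
        (hasDerivAt_const t y).prodMk (hasDerivAt_id t)
      exact h1.comp_hasDerivAt t h2
    rw [hdt.deriv, e3 t, e2 t, e1 t] at h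
    simpa using h
  -- periodicity of the derivatives
  have perU1 : ∀ y s : ℝ, U1 (y + 1, s) = U1 (y, s) := fun y s =>
    periodic_of_hasDerivAt (fun z => idd1 z s) (fun z => hper z s) y
  have perU2 : ∀ y s : ℝ, U2 (y + 1, s) = U2 (y, s) := fun y s =>
    periodic_of_hasDerivAt (fun z => idd2 z s) (fun z => perU1 z s) y
  -- bounds
  obtain ⟨L0, hL00, hL0b⟩ := periodic_bound hU1.continuous perU1 t₀
  set L : ℝ := max L0 1 with hLdef
  have hL1 : (1 : ℝ) ≤ L := le_max_right _ _
  have hLpos : (0 : ℝ) < L := lt_of_lt_of_le one_pos hL1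
  have hLb : ∀ y : ℝ, ∀ s ∈ Icc (0:ℝ) t₀, |U1 (y, s)| ≤ L := fun y s hs =>
    (hL0b y s hs).trans (le_max_left _ _)
  obtain ⟨K, hK0, hKb⟩ := periodic_bound hU2.continuous perU2 t₀
  have hsub : Icc (0:ℝ) t₀ ⊆ Ico (0:ℝ) T := fun s hs => ⟨hs.1, lt_of_le_of_lt hs.2 htT⟩
  have hsub' : Ico (0:ℝ) t₀ ⊆ Icc (0:ℝ) t₀ := Ico_subset_Icc_self
  have γcont : ∀ y : ℝ, ContinuousOn (fun s => γ y s) (Icc 0 t₀) := fun y s hs =>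
    ((hflow y s (hsub hs)).continuousAt).continuousWithinAt
  -- Lipschitz bound of u in space
  have uLip : ∀ s ∈ Icc (0:ℝ) t₀, ∀ b c : ℝ, |u b s - u c s| ≤ L * |b - c| := by
    intro s hs b c
    exact mvt_abs b c (fun z => idd1 z s) (fun z _ => hLb z s hs)
  -- Lipschitz of the flow in the initial point
  have flowLip : ∀ y : ℝ, ∀ s ∈ Icc (0:ℝ) t₀, |γ y s - γ x s| ≤ |y - x| * exp (L * s) := by
    intro y s hs
    have H := norm_le_gronwallBound_of_norm_deriv_right_le
      (f := fun s => γ y s - γ x s) (f' := fun s => u (γ y s) s - u (γ x s) s)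
      (δ := |y - x|) (K := L) (ε := 0) (a := 0) (b := t₀)
      (((γcont y).sub (γcont x)))
      (fun r hr => (((hflow y r (hsub (hsub' hr))).sub
        (hflow x r (hsub (hsub' hr)))).hasDerivWithinAt))
      (by simp [hγ0])
      (fun r hr => by
        rw [Real.norm_eq_abs, Real.norm_eq_abs, add_zero]
        exact uLip r (hsub' hr) _ _)
      s hs
    rwa [Real.norm_eq_abs, sub_zero, gronwallBound_ε0] at H
  -- first-order Taylor bound for u in space
  have taylor : ∀ s ∈ Icc (0:ℝ) t₀, ∀ b c : ℝ,
      |u b s - u c s - U1 (c, s) * (b - c)| ≤ K * |b - c| ^ 2 := by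
    intro s hs b c
    have hφd : ∀ z, HasDerivAt (fun z => u z s - U1 (c, s) * z) (U1 (z, s) - U1 (c, s)) z := by
      intro z
      simpa using (idd1 z s).fun_sub ((hasDerivAt_id z).const_mul (U1 (c, s)))
    have hbd : ∀ z ∈ uIcc c b, |U1 (z, s) - U1 (c, s)| ≤ K * |b - c| := by
      intro z hz
      have h1 : |U1 (z, s) - U1 (c, s)| ≤ K * |z - c| :=
        mvt_abs z c (fun w => idd2 w s) (fun w _ => hKb w s hs)
      exact h1.trans (by
        have := abs_sub_left_of_mem_uIcc hz
        nlinarith [abs_nonneg (z - c), abs_nonneg (b - c)])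
    have := mvt_abs b c hφd hbd
    calc |u b s - u c s - U1 (c, s) * (b - c)|
        = |(u b s - U1 (c, s) * b) - (u c s - U1 (c, s) * c)| := by ring_nf
      _ ≤ K * |b - c| * |b - c| := this
      _ = K * |b - c| ^ 2 := by ring
  -- the coefficient a and integrating factor E
  set c : ℝ → ℝ := fun s => min (max s 0) t₀ with hcdef
  have hc : ∀ s ∈ Icc (0:ℝ) t₀, c s = s := by
    intro s hs
    simp [hcdef, max_eq_left hs.1, min_eq_left hs.2]
  have hcmem : ∀ s : ℝ, c s ∈ Icc (0:ℝ) t₀ := by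
    intro s
    exact ⟨le_min (le_max_right s 0) ht0, min_le_right _ _⟩
  have hccont : Continuous c := (continuous_id.max continuous_const).min continuous_const
  set a : ℝ → ℝ := fun s => U1 (γ x (c s), c s) with hadef
  have acont : Continuous a := by
    have h1 : Continuous fun s => γ x (c s) :=
      (γcont x).comp_continuous hccont hcmem
    exact hU1.continuous.comp (h1.prodMk hccont)
  have haeq : ∀ s ∈ Icc (0:ℝ) t₀, a s = U1 (γ x s, s) := by
    intro s hs; simp only [hadef, hc s hs]
  set E : ℝ → ℝ := fun s => Real.exp (∫ τ in (0:ℝ)..s, a τ) with hEdef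
  have hE : ∀ s : ℝ, HasDerivAt E (a s * E s) s := by
    intro s
    have h1 : HasDerivAt (fun r => ∫ τ in (0:ℝ)..r, a τ) (a s) s :=
      (acont.integral_hasStrictDerivAt 0 s).hasDerivAt
    simpa [hEdef, mul_comm] using h1.exp
  have hEpos : ∀ s, 0 < E s := fun s => exp_pos _
  have hE0 : E 0 = 1 := by simp [hEdef]
  have hEcont : Continuous E := by
    exact continuous_iff_continuousAt.2 fun s => (hE s).continuousAt
  -- the quantity transported along the flow
  set h : ℝ → ℝ := fun s => U2 (γ x s, s) with hhdef
  have hh : ∀ s ∈ Icc (0:ℝ) t₀, HasDerivAt h (-(α * a s * h s)) s := by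
    intro s hs
    have hs' : s ∈ Ico (0:ℝ) T := hsub hs
    have H : HasDerivAt h (fderiv ℝ U2 (γ x s, s) (u (γ x s) s, 1)) s :=
      hasDerivAt_comp_curve (hU2.differentiable (by simp)) (hflow x s hs')
    have hdir := dir_split U2 (γ x s, s) (u (γ x s) s)
    have hpde := pde (γ x s) s hs'
    rw [hdir] at H
    have haa := haeq s hs
    convert H using 1
    rw [haa]
    simp only [hhdef]
    have hUu : U3 (γ x s, s) = fderiv ℝ U2 (γ x s, s) (1, 0) := rfl
    rw [← hUu]
    linarith [hpde]
  -- the conserved quantity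
  set G : ℝ → ℝ := fun s => h s * (E s) ^ α with hGdef
  have hG : ∀ s ∈ Icc (0:ℝ) t₀, HasDerivAt G 0 s := by
    intro s hs
    have h1 := hh s hs
    have h2 : HasDerivAt (fun s => (E s) ^ α) ((a s * E s) * α * (E s) ^ (α - 1)) s :=
      (hE s).rpow_const (Or.inl (hEpos s).ne')
    have h3 := h1.fun_mul h2
    have key : (E s) ^ (α - 1) * E s = (E s) ^ α := by
      rw [← Real.rpow_add_one (hEpos s).ne' (α - 1)]
      ring_nf
    refine h3.congr_deriv ?_
    have expand : -(α * a s * h s) * E s ^ α + h s * (a s * E s * α * E s ^ (α - 1))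
        = α * a s * h s * (E s ^ (α - 1) * E s - E s ^ α) := by ring
    rw [expand, key, sub_self, mul_zero]
  have hGcont : ContinuousOn G (Icc 0 t₀) := fun s hs =>
    ((hG s hs).continuousAt).continuousWithinAt
  have hGconst : G t₀ = G 0 :=
    constant_of_has_deriv_right_zero hGcont
      (fun s hs => (hG s (hsub' hs)).hasDerivWithinAt) t₀ (right_mem_Icc.2 ht0)
  -- quadratic estimate giving the spatial derivative of the flow
  set C : ℝ := K * Real.exp (2 * L * t₀) * ((Real.exp (L * t₀) - 1) / L) with hCdef
  have quad : ∀ y : ℝ, |γ y t₀ - γ x t₀ - (y - x) * E t₀| ≤ C * (y - x) ^ 2 := by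
    intro y
    set ε : ℝ := K * Real.exp (2 * L * t₀) * (y - x) ^ 2 with hεdef
    set ρ : ℝ → ℝ := fun s => γ y s - γ x s - (y - x) * E s with hρdef
    have ρ0 : ρ 0 = 0 := by simp [hρdef, hγ0, hE0]
    have ρder : ∀ s ∈ Ico (0:ℝ) t₀, HasDerivWithinAt ρ
        (u (γ y s) s - u (γ x s) s - (y - x) * (a s * E s)) (Ici s) s := by
      intro s hs
      exact (((hflow y s (hsub (hsub' hs))).sub (hflow x s (hsub (hsub' hs)))).sub
        ((hE s).const_mul (y - x))).hasDerivWithinAt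
    have ρcont : ContinuousOn ρ (Icc 0 t₀) :=
      (((γcont y).sub (γcont x)).sub ((continuous_const.mul hEcont).continuousOn))
    have ρbound : ∀ s ∈ Ico (0:ℝ) t₀,
        ‖u (γ y s) s - u (γ x s) s - (y - x) * (a s * E s)‖ ≤ L * ‖ρ s‖ + ε := by
      intro s hs
      have hsI : s ∈ Icc (0:ℝ) t₀ := hsub' hs
      have h1 := taylor s hsI (γ y s) (γ x s)
      have h2 := flowLip y s hsI
      have haa := haeq s hsI
      have key : u (γ y s) s - u (γ x s) s - (y - x) * (a s * E s)
          = (u (γ y s) s - u (γ x s) s - U1 (γ x s, s) * (γ y s - γ x s))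
            + U1 (γ x s, s) * ρ s := by
        rw [haa]; simp only [hρdef]; ring
      rw [Real.norm_eq_abs, Real.norm_eq_abs, key]
      have hU1b := hLb (γ x s) s hsI
      have step1 : |(u (γ y s) s - u (γ x s) s - U1 (γ x s, s) * (γ y s - γ x s))
          + U1 (γ x s, s) * ρ s| ≤ K * |γ y s - γ x s| ^ 2 + L * |ρ s| := by
        calc _ ≤ |u (γ y s) s - u (γ x s) s - U1 (γ x s, s) * (γ y s - γ x s)|
              + |U1 (γ x s, s) * ρ s| := abs_add_le _ _
          _ ≤ K * |γ y s - γ x s| ^ 2 + L * |ρ s| := by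
              rw [abs_mul]
              gcongr
      have step2 : K * |γ y s - γ x s| ^ 2 ≤ ε := by
        have e1 : |γ y s - γ x s| ^ 2 ≤ (|y - x| * Real.exp (L * s)) ^ 2 := by
          have := abs_nonneg (γ y s - γ x s)
          nlinarith [h2]
        have e2 : Real.exp (L * s) ^ 2 ≤ Real.exp (2 * L * t₀) := by
          rw [← Real.exp_nat_mul]
          apply Real.exp_le_exp.2
          push_cast
          nlinarith [hLpos, hsI.2, hsI.1]
        calc K * |γ y s - γ x s| ^ 2 ≤ K * ((|y - x| * Real.exp (L * s)) ^ 2) := by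
              gcongr
          _ = K * (Real.exp (L * s) ^ 2) * |y - x| ^ 2 := by ring
          _ ≤ K * Real.exp (2 * L * t₀) * |y - x| ^ 2 := by gcongr
          _ = ε := by rw [hεdef, sq_abs]
      calc |(u (γ y s) s - u (γ x s) s - U1 (γ x s, s) * (γ y s - γ x s))
            + U1 (γ x s, s) * ρ s| ≤ K * |γ y s - γ x s| ^ 2 + L * |ρ s| := step1
        _ ≤ L * |ρ s| + ε := by linarith
    have H := norm_le_gronwallBound_of_norm_deriv_right_le
      (f := ρ) (f' := fun s => u (γ y s) s - u (γ x s) s - (y - x) * (a s * E s))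
      (δ := 0) (K := L) (ε := ε) (a := 0) (b := t₀)
      ρcont ρder (by simp [ρ0]) ρbound t₀ (right_mem_Icc.2 ht0)
    rw [Real.norm_eq_abs, sub_zero, gronwallBound_of_K_ne_0 hLpos.ne'] at H
    calc |γ y t₀ - γ x t₀ - (y - x) * E t₀| = |ρ t₀| := rfl
      _ ≤ 0 * Real.exp (L * t₀) + ε / L * (Real.exp (L * t₀) - 1) := H
      _ = C * (y - x) ^ 2 := by rw [hCdef, hεdef]; ring
  -- hence the spatial derivative of the flow at time t₀ equals E t₀
  have hDγ : HasDerivAt (fun y => γ y t₀) (E t₀) x := by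
    rw [hasDerivAt_iff_isLittleO]
    have hO : (fun y => γ y t₀ - γ x t₀ - (y - x) * E t₀) =O[𝓝 x]
        (fun y => (y - x) ^ 2) := by
      apply Asymptotics.IsBigO.of_bound C
      filter_upwards with y
      rw [Real.norm_eq_abs, Real.norm_eq_abs, abs_pow, sq_abs]
      exact quad y
    have ho : (fun y : ℝ => (y - x) ^ 2) =o[𝓝 x] (fun y => y - x) := by
      have h1 : (fun y : ℝ => y - x) =o[𝓝 x] (fun _ : ℝ => (1 : ℝ)) := by
        rw [Asymptotics.isLittleO_one_iff]
        have : Filter.Tendsto (fun y : ℝ => y - x) (𝓝 x) (𝓝 (x - x)) :=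
          (continuous_id.sub continuous_const).tendsto x
        simpa using this
      have h2 := (Asymptotics.isBigO_refl (fun y : ℝ => y - x) (𝓝 x)).mul_isLittleO h1
      simpa [pow_two] using h2
    have := hO.trans_isLittleO ho
    simpa [smul_eq_mul] using this
  have hderivγ : deriv (fun y => γ y t₀) x = E t₀ := hDγ.deriv
  -- conclude
  rw [hderivγ]
  have lhs1 : deriv (deriv (fun y => u y t₀)) (γ x t₀) = U2 (γ x t₀, t₀) := by rw [e2 t₀]
  have rhs1 : deriv (deriv (fun y => u y 0)) x = U2 (x, 0) := by rw [e2 0]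
  rw [lhs1, rhs1]
  have g0 : G 0 = U2 (x, 0) := by
    simp [hGdef, hhdef, hE0, hγ0, Real.one_rpow]
  calc U2 (γ x t₀, t₀) * E t₀ ^ α = G t₀ := rfl
    _ = G 0 := hGconst
    _ = U2 (x, 0) := g0
end

section
/- Let n > 3 and set p = (n−1)/(n−3). If u is smooth, 1-periodic in x, and satisfies ∂ₜ∂ₓ²u + u ∂ₓ³u + ((n−3)/(n−1)) ∂ₓu ∂ₓ²u = 0, then the quantity ∫₀¹ |∂ₓ²u(x,t)|^p dx is constant in time. -/
open Real Filter Topology MeasureTheory Set intervalIntegral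

noncomputable def pdeD1 (F : ℝ × ℝ → ℝ) : ℝ × ℝ → ℝ :=
  fun z => deriv (fun y => F (y, z.2)) z.1

noncomputable def pdeD2 (F : ℝ × ℝ → ℝ) : ℝ × ℝ → ℝ :=
  fun z => deriv (fun s => F (z.1, s)) z.2

lemma pdeD1_contDiff {F : ℝ × ℝ → ℝ} (hF : ContDiff ℝ (⊤ : ℕ∞) F) :
    ContDiff ℝ (⊤ : ℕ∞) (pdeD1 F) := by
  have h : ContDiff ℝ (⊤ : ℕ∞) (Function.uncurry fun (z : ℝ × ℝ) (y : ℝ) => F (y, z.2)) :=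
    hF.comp (contDiff_snd.prodMk ((contDiff_snd.comp contDiff_fst)))
  have h2 := h.fderiv_apply (n := (⊤ : ℕ∞)) (g := fun z : ℝ × ℝ => z.1) (k := fun _ => (1:ℝ))
    contDiff_fst contDiff_const (by simp)
  exact h2

lemma pdeD2_contDiff {F : ℝ × ℝ → ℝ} (hF : ContDiff ℝ (⊤ : ℕ∞) F) :
    ContDiff ℝ (⊤ : ℕ∞) (pdeD2 F) := by
  have h : ContDiff ℝ (⊤ : ℕ∞) (Function.uncurry fun (z : ℝ × ℝ) (s : ℝ) => F (z.1, s)) :=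
    hF.comp (((contDiff_fst.comp contDiff_fst)).prodMk contDiff_snd)
  have h2 := h.fderiv_apply (n := (⊤ : ℕ∞)) (g := fun z : ℝ × ℝ => z.2) (k := fun _ => (1:ℝ))
    contDiff_snd contDiff_const (by simp)
  exact h2

lemma pdeD1_hasDerivAt {F : ℝ × ℝ → ℝ} (hF : ContDiff ℝ (⊤ : ℕ∞) F) (x t : ℝ) :
    HasDerivAt (fun y => F (y, t)) (pdeD1 F (x, t)) x := by
  have hd : DifferentiableAt ℝ (fun y => F (y, t)) x :=
    ((hF.comp (contDiff_id.prodMk contDiff_const)).differentiable (by simp)).differentiableAt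
  exact hd.hasDerivAt

lemma pdeD2_hasDerivAt {F : ℝ × ℝ → ℝ} (hF : ContDiff ℝ (⊤ : ℕ∞) F) (x t : ℝ) :
    HasDerivAt (fun s => F (x, s)) (pdeD2 F (x, t)) t := by
  have hd : DifferentiableAt ℝ (fun s => F (x, s)) t :=
    ((hF.comp (contDiff_const.prodMk contDiff_id)).differentiable (by simp)).differentiableAt
  exact hd.hasDerivAt

lemma pdeD1_periodic {F : ℝ × ℝ → ℝ} (h : ∀ x t, F (x + 1, t) = F (x, t)) (x t : ℝ) :
    pdeD1 F (x + 1, t) = pdeD1 F (x, t) := by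
  have hfun : (fun y => F (y + 1, t)) = fun y => F (y, t) := funext fun y => h y t
  have h2 : pdeD1 F (x + 1, t) = deriv (fun y => F (y + 1, t)) x := by
    simp only [pdeD1]
    rw [← deriv_comp_add_const]
  rw [h2, hfun]; rfl

lemma abs_rpow_hasDerivAt {p : ℝ} (hp : 1 < p) (y : ℝ) :
    HasDerivAt (fun s : ℝ => |s| ^ p) (p * |y| ^ (p - 2) * y) y := by
  rcases lt_trichotomy y 0 with hy | rfl | hy
  · have h1 : HasDerivAt (fun s : ℝ => (-s) ^ p) ((p * (-y) ^ (p - 1)) * (-1)) y :=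
      (Real.hasDerivAt_rpow_const (x := -y) (p := p) (Or.inl (by linarith))).comp y
        (hasDerivAt_neg y)
    have h2 : (fun s : ℝ => |s| ^ p) =ᶠ[𝓝 y] fun s : ℝ => (-s) ^ p := by
      filter_upwards [Iio_mem_nhds hy] with s hs
      rw [abs_of_neg hs]
    have h3 := h1.congr_of_eventuallyEq h2
    refine h3.congr_deriv ?_
    rw [abs_of_neg hy, show p - 1 = (p - 2) + 1 by ring,
      Real.rpow_add_one (by intro h; nlinarith [neg_pos.mpr hy] : -y ≠ 0)]
    ring
  · have hb : Tendsto (fun s : ℝ => |s| ^ (p - 1)) (𝓝[≠] (0:ℝ)) (𝓝 0) := by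
      have hc : ContinuousAt (fun s : ℝ => |s| ^ (p - 1)) 0 :=
        (continuous_abs.continuousAt).rpow_const (Or.inr (by linarith))
      have h0 : |(0:ℝ)| ^ (p - 1) = 0 := by
        rw [abs_zero, Real.zero_rpow (by linarith : p - 1 ≠ 0)]
      have := hc.tendsto
      rw [h0] at this
      exact this.mono_left nhdsWithin_le_nhds
    have hslope : Tendsto (slope (fun s : ℝ => |s| ^ p) 0) (𝓝[≠] (0:ℝ)) (𝓝 0) := by
      apply squeeze_zero_norm' _ hb
      filter_upwards [self_mem_nhdsWithin] with s hs
      have hs0 : s ≠ 0 := hs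
      have hs' : (0:ℝ) < |s| := abs_pos.mpr hs0
      have : slope (fun s : ℝ => |s| ^ p) 0 s = |s| ^ p / s := by
        rw [slope_def_field]
        rw [abs_zero, Real.zero_rpow (by linarith : p ≠ 0)]
        ring
      rw [this, norm_div, Real.norm_eq_abs, Real.norm_eq_abs,
        abs_of_nonneg (Real.rpow_nonneg (abs_nonneg s) p)]
      rw [Real.rpow_sub hs', Real.rpow_one]
    have h0 : HasDerivAt (fun s : ℝ => |s| ^ p) 0 0 := by
      rw [hasDerivAt_iff_tendsto_slope]; exact hslope
    convert h0 using 1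
    simp
  · have h1 : HasDerivAt (fun s : ℝ => s ^ p) (p * y ^ (p - 1)) y :=
      Real.hasDerivAt_rpow_const (Or.inl (ne_of_gt hy))
    have h2 : (fun s : ℝ => |s| ^ p) =ᶠ[𝓝 y] fun s : ℝ => s ^ p := by
      filter_upwards [Ioi_mem_nhds hy] with s hs
      rw [abs_of_pos hs]
    have h3 := h1.congr_of_eventuallyEq h2
    refine h3.congr_deriv ?_
    rw [abs_of_pos hy, show p - 1 = (p - 2) + 1 by ring,
      Real.rpow_add_one (ne_of_gt hy)]
    ring

lemma psi_norm_le {p : ℝ} (hp : 1 < p) (y : ℝ) :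
    ‖p * |y| ^ (p - 2) * y‖ ≤ p * |y| ^ (p - 1) := by
  rcases eq_or_ne y 0 with rfl | hy
  · simp [Real.zero_rpow (by linarith : p - 1 ≠ 0)]
  · have hy' : (0:ℝ) < |y| := abs_pos.mpr hy
    rw [norm_mul, norm_mul, Real.norm_eq_abs, Real.norm_eq_abs, Real.norm_eq_abs,
      abs_of_nonneg (Real.rpow_nonneg (abs_nonneg y) _),
      abs_of_pos (by linarith : (0:ℝ) < p)]
    rw [show p - 1 = (p - 2) + 1 by ring, Real.rpow_add_one (ne_of_gt hy')]
    apply le_of_eq; ring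


lemma psi_continuous {p : ℝ} (hp : 1 < p) :
    Continuous (fun y : ℝ => p * |y| ^ (p - 2) * y) := by
  rw [continuous_iff_continuousAt]
  intro y
  rcases eq_or_ne y 0 with rfl | hy
  · have hb : Tendsto (fun s : ℝ => p * |s| ^ (p - 1)) (𝓝 (0:ℝ)) (𝓝 0) := by
      have hc : ContinuousAt (fun s : ℝ => p * |s| ^ (p - 1)) 0 :=
        continuousAt_const.mul ((continuous_abs.continuousAt).rpow_const (Or.inr (by linarith)))
      have h0 : p * |(0:ℝ)| ^ (p - 1) = 0 := by
        rw [abs_zero, Real.zero_rpow (by linarith : p - 1 ≠ 0)]; ring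
      have := hc.tendsto; rwa [h0] at this
    have key : Tendsto (fun s : ℝ => p * |s| ^ (p - 2) * s) (𝓝 (0:ℝ)) (𝓝 0) :=
      squeeze_zero_norm (fun s => psi_norm_le hp s) hb
    have h0 : (fun y : ℝ => p * |y| ^ (p - 2) * y) 0 = 0 := by simp
    unfold ContinuousAt
    convert key using 2
  · exact (continuousAt_const.mul
      ((continuous_abs.continuousAt).rpow_const (Or.inl (abs_ne_zero.mpr hy)))).mul
      continuousAt_id

lemma psi_mul {p : ℝ} (hp : 1 < p) (y : ℝ) :
    (p * |y| ^ (p - 2) * y) * y = p * |y| ^ p := by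
  rcases eq_or_ne y 0 with rfl | hy
  · simp [Real.zero_rpow (by linarith : p ≠ 0)]
  · have hy' : |y| ≠ 0 := abs_ne_zero.mpr hy
    have e : |y| ^ p = |y| ^ (p - 2) * |y| * |y| := by
      rw [← Real.rpow_add_one hy', ← Real.rpow_add_one hy']
      congr 1
      ring
    rw [e]
    linear_combination (-p) * |y| ^ (p - 2) * (abs_mul_abs_self y)

theorem conserved_aux (p c T : ℝ) (hp : 1 < p) (hcp : c * p = 1)
    (U : ℝ × ℝ → ℝ) (hU : ContDiff ℝ (⊤ : ℕ∞) U)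
    (hperU : ∀ x t : ℝ, U (x + 1, t) = U (x, t))
    (hpde : ∀ x : ℝ, ∀ t ∈ Ico (0:ℝ) T,
      pdeD2 (pdeD1 (pdeD1 U)) (x, t)
        + U (x, t) * pdeD1 (pdeD1 (pdeD1 U)) (x, t)
        + c * pdeD1 U (x, t) * pdeD1 (pdeD1 U) (x, t) = 0) :
    ∀ t₁ ∈ Ico (0:ℝ) T, ∀ t₂ ∈ Ico (0:ℝ) T,
      (∫ x in (0:ℝ)..1, |pdeD1 (pdeD1 U) (x, t₁)| ^ p)
        = ∫ x in (0:ℝ)..1, |pdeD1 (pdeD1 U) (x, t₂)| ^ p := by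
  intro t₁ ht₁ t₂ ht₂
  set A : ℝ × ℝ → ℝ := pdeD1 U with hA_def
  set V : ℝ × ℝ → ℝ := pdeD1 A with hV_def
  set W : ℝ × ℝ → ℝ := pdeD1 V with hW_def
  have hA' : ContDiff ℝ (⊤ : ℕ∞) A := pdeD1_contDiff hU
  have hV' : ContDiff ℝ (⊤ : ℕ∞) V := pdeD1_contDiff hA'
  have hW' : ContDiff ℝ (⊤ : ℕ∞) W := pdeD1_contDiff hV'
  have hperA : ∀ x t : ℝ, A (x + 1, t) = A (x, t) := fun x t => pdeD1_periodic hperU x t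
  have hperV : ∀ x t : ℝ, V (x + 1, t) = V (x, t) := fun x t => pdeD1_periodic hperA x t
  have hpde' : ∀ x : ℝ, ∀ t ∈ Ico (0:ℝ) T,
      pdeD2 V (x, t) = -(U (x, t) * W (x, t) + c * A (x, t) * V (x, t)) := by
    intro x t ht
    have h := hpde x t ht
    linarith
  set ψ : ℝ → ℝ := fun y => p * |y| ^ (p - 2) * y with hψ_def
  have cψ : Continuous ψ := psi_continuous hp
  have cφ : Continuous (fun y : ℝ => |y| ^ p) :=
    continuous_abs.rpow_const (fun y => Or.inr (by linarith))
  have cU : Continuous U := hU.continuous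
  have cA : Continuous A := hA'.continuous
  have cV : Continuous V := hV'.continuous
  have cW : Continuous W := hW'.continuous
  have cD2V : Continuous (pdeD2 V) := (pdeD2_contDiff hV').continuous
  set G : ℝ → ℝ := fun t => ∫ x in (0:ℝ)..1, |V (x, t)| ^ p with hG_def
  have hGderiv : ∀ t₀ : ℝ, HasDerivAt G
      (∫ x in (0:ℝ)..1, ψ (V (x, t₀)) * pdeD2 V (x, t₀)) t₀ := by
    intro t₀
    have hgc : Continuous (fun z : ℝ × ℝ => ‖ψ (V z) * pdeD2 V z‖) :=
      ((cψ.comp cV).mul cD2V).norm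
    obtain ⟨z, hzK, hzmax0⟩ :=
      (isCompact_Icc.prod isCompact_Icc :
          IsCompact ((Icc (0:ℝ) 1) ×ˢ (Icc (t₀ - 1) (t₀ + 1)))).exists_isMaxOn
        ⟨(0, t₀), by constructor <;> constructor <;> norm_num⟩
        hgc.continuousOn
    have hzmax : ∀ w ∈ (Icc (0:ℝ) 1) ×ˢ (Icc (t₀ - 1) (t₀ + 1)),
        ‖ψ (V w) * pdeD2 V w‖ ≤ ‖ψ (V z) * pdeD2 V z‖ := fun w hw => hzmax0 hw
    have hmem : ∀ x ∈ Set.uIoc (0:ℝ) 1, ∀ t ∈ Metric.ball t₀ 1,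
        (x, t) ∈ (Icc (0:ℝ) 1) ×ˢ (Icc (t₀ - 1) (t₀ + 1)) := by
      intro x hx t ht
      rw [Set.uIoc_of_le (by norm_num : (0:ℝ) ≤ 1)] at hx
      rw [Metric.mem_ball, Real.dist_eq, abs_lt] at ht
      exact ⟨⟨le_of_lt hx.1, hx.2⟩, ⟨by linarith [ht.1], by linarith [ht.2]⟩⟩
    have main := intervalIntegral.hasDerivAt_integral_of_dominated_loc_of_deriv_le
      (F := fun t x => |V (x, t)| ^ p)
      (F' := fun t x => ψ (V (x, t)) * pdeD2 V (x, t))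
      (bound := fun _ => ‖ψ (V z) * pdeD2 V z‖)
      (a := 0) (b := 1) (μ := volume) (x₀ := t₀) (s := Metric.ball t₀ 1) (Metric.ball_mem_nhds t₀ one_pos)
      (Eventually.of_forall fun t =>
        (cφ.comp (cV.comp (continuous_id.prodMk continuous_const))).aestronglyMeasurable)
      ((cφ.comp (cV.comp (continuous_id.prodMk continuous_const))).intervalIntegrable 0 1)
      (((cψ.comp (cV.comp (continuous_id.prodMk continuous_const))).mul
        (cD2V.comp (continuous_id.prodMk continuous_const))).aestronglyMeasurable)
      (Eventually.of_forall fun x hx t ht => hzmax (x, t) (hmem x hx t ht))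
      intervalIntegrable_const
      (Eventually.of_forall fun x hx t ht =>
        (abs_rpow_hasDerivAt hp (V (x, t))).comp (h₂ := fun s : ℝ => |s| ^ p) t (pdeD2_hasDerivAt hV' x t))
    exact main.2
  have hzero : ∀ t₀ ∈ Ico (0:ℝ) T,
      (∫ x in (0:ℝ)..1, ψ (V (x, t₀)) * pdeD2 V (x, t₀)) = 0 := by
    intro t₀ ht₀
    have hXc : Continuous fun x : ℝ => (x, t₀) := continuous_id.prodMk continuous_const
    have hint1 : IntervalIntegrable (fun x => A (x, t₀) * |V (x, t₀)| ^ p) volume 0 1 :=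
      ((cA.comp hXc).mul (cφ.comp (cV.comp hXc))).intervalIntegrable 0 1
    have hint2 : IntervalIntegrable
        (fun x => U (x, t₀) * (ψ (V (x, t₀)) * W (x, t₀))) volume 0 1 :=
      ((cU.comp hXc).mul ((cψ.comp (cV.comp hXc)).mul (cW.comp hXc))).intervalIntegrable 0 1
    have hibp := intervalIntegral.integral_mul_deriv_eq_deriv_mul
      (u := fun x => U (x, t₀)) (u' := fun x => A (x, t₀))
      (v := fun x => |V (x, t₀)| ^ p) (v' := fun x => ψ (V (x, t₀)) * W (x, t₀))
      (a := 0) (b := 1)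
      (fun x _ => pdeD1_hasDerivAt hU x t₀)
      (fun x _ => (abs_rpow_hasDerivAt hp (V (x, t₀))).comp (h₂ := fun s : ℝ => |s| ^ p) x (pdeD1_hasDerivAt hV' x t₀))
      ((cA.comp hXc).intervalIntegrable 0 1)
      (((cψ.comp (cV.comp hXc)).mul (cW.comp hXc)).intervalIntegrable 0 1)
    have hU01 : U (1, t₀) = U (0, t₀) := by
      have := hperU 0 t₀; rwa [zero_add] at this
    have hV01 : V (1, t₀) = V (0, t₀) := by
      have := hperV 0 t₀; rwa [zero_add] at this
    rw [hU01, hV01] at hibp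
    have hibp' : (∫ x in (0:ℝ)..1, U (x, t₀) * (ψ (V (x, t₀)) * W (x, t₀)))
        = -∫ x in (0:ℝ)..1, A (x, t₀) * |V (x, t₀)| ^ p := by
      rw [hibp]; ring
    have hfun : (fun x => ψ (V (x, t₀)) * pdeD2 V (x, t₀))
        = fun x => -(U (x, t₀) * (ψ (V (x, t₀)) * W (x, t₀)))
            - c * p * (A (x, t₀) * |V (x, t₀)| ^ p) := by
      funext x
      rw [hpde' x t₀ ht₀]
      have hm : ψ (V (x, t₀)) * V (x, t₀) = p * |V (x, t₀)| ^ p := by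
        rw [hψ_def]; exact psi_mul hp _
      linear_combination (-(c * A (x, t₀))) * hm
    have hsplit : (∫ x in (0:ℝ)..1,
          (-(U (x, t₀) * (ψ (V (x, t₀)) * W (x, t₀)))
            - c * p * (A (x, t₀) * |V (x, t₀)| ^ p)))
        = (∫ x in (0:ℝ)..1, -(U (x, t₀) * (ψ (V (x, t₀)) * W (x, t₀))))
          - ∫ x in (0:ℝ)..1, c * p * (A (x, t₀) * |V (x, t₀)| ^ p) :=
      intervalIntegral.integral_sub (by exact hint2.neg) (by exact hint1.const_mul (c * p))
    rw [hfun, hsplit, intervalIntegral.integral_neg, intervalIntegral.integral_const_mul,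
      hibp', hcp]
    ring
  have hG0 : ∀ t₀ ∈ Ico (0:ℝ) T, HasDerivAt G 0 t₀ := by
    intro t₀ ht₀
    have h := hGderiv t₀
    rwa [hzero t₀ ht₀] at h
  have key : ∀ s₁ ∈ Ico (0:ℝ) T, ∀ s₂ ∈ Ico (0:ℝ) T, s₁ ≤ s₂ → G s₂ = G s₁ := by
    intro s₁ hs₁ s₂ hs₂ h12
    have hcont : ContinuousOn G (Icc s₁ s₂) := fun x _ =>
      ((hGderiv x).continuousAt).continuousWithinAt
    exact constant_of_has_deriv_right_zero hcont
      (fun x hx =>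
        (hG0 x ⟨le_trans hs₁.1 hx.1, lt_trans hx.2 hs₂.2⟩).hasDerivWithinAt)
      s₂ ⟨h12, le_refl s₂⟩
  rcases le_total t₁ t₂ with h | h
  · exact (key t₁ ht₁ t₂ ht₂ h).symm
  · exact key t₂ ht₂ t₁ ht₁ h

/-- For n > 3 and p = (n−1)/(n−3), if u is smooth, 1-periodic in x and
satisfies ∂ₜ∂ₓ²u + u ∂ₓ³u + ((n−3)/(n−1)) ∂ₓu ∂ₓ²u = 0, then
∫₀¹ |∂ₓ²u(x,t)|^p dx is constant in time. -/
theorem Lp_norm_of_uxx_conserved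
    (n : ℕ) (hn : 3 < n) (T : ℝ) (hT : 0 < T)
    (u : ℝ → ℝ → ℝ)
    (hu : ContDiff ℝ (⊤ : ℕ∞) (fun z : ℝ × ℝ => u z.1 z.2))
    (hper : ∀ x t, u (x + 1) t = u x t)
    (heq : ∀ x : ℝ, ∀ t ∈ Ico (0:ℝ) T,
      deriv (fun τ => deriv (deriv (fun y => u y τ)) x) t
        + u x t * deriv (deriv (deriv (fun y => u y t))) x
        + (((n : ℝ) - 3) / ((n : ℝ) - 1)) * deriv (fun y => u y t) x
            * deriv (deriv (fun y => u y t)) x = 0) :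
    ∀ t₁ ∈ Ico (0:ℝ) T, ∀ t₂ ∈ Ico (0:ℝ) T,
      (∫ x in (0:ℝ)..1, |deriv (deriv (fun y => u y t₁)) x|
          ^ ((((n : ℝ) - 1) / ((n : ℝ) - 3)) : ℝ))
        = ∫ x in (0:ℝ)..1, |deriv (deriv (fun y => u y t₂)) x|
          ^ ((((n : ℝ) - 1) / ((n : ℝ) - 3)) : ℝ) := by
  have hn' : (3:ℝ) < (n:ℝ) := by exact_mod_cast hn
  have h3 : (0:ℝ) < (n:ℝ) - 3 := by linarith
  have h1 : (0:ℝ) < (n:ℝ) - 1 := by linarith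
  have hp : 1 < ((n:ℝ) - 1) / ((n:ℝ) - 3) := by
    rw [lt_div_iff₀ h3]; linarith
  have hcp : (((n:ℝ) - 3) / ((n:ℝ) - 1)) * (((n:ℝ) - 1) / ((n:ℝ) - 3)) = 1 := by
    field_simp
  exact conserved_aux (((n:ℝ) - 1) / ((n:ℝ) - 3)) (((n:ℝ) - 3) / ((n:ℝ) - 1)) T hp hcp
    (fun z => u z.1 z.2) hu (fun x t => hper x t) (fun x t ht => heq x t ht)
end

section
/- Let n = 3. If u is smooth, 1-periodic in x, and satisfies ∂ₜ∂ₓ²u + u ∂ₓ³u = 0, then the sup norm sup_x |∂ₓ²u(x,t)| is constant in time. -/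
open Real Filter Topology MeasureTheory Set intervalIntegral

private lemma aux_deriv_periodic {g g' : ℝ → ℝ} (hg : ∀ x, HasDerivAt g (g' x) x)
    (hgp : ∀ x, g (x + 1) = g x) (x : ℝ) : g' (x + 1) = g' x := by
  have h1 : HasDerivAt (fun y => g (y + 1)) (g' (x + 1) * 1) x :=
    HasDerivAt.comp x (hg (x + 1)) ((hasDerivAt_id x).add_const 1)
  have h2 : (fun y => g (y + 1)) = g := funext hgp
  rw [h2, mul_one] at h1
  exact h1.unique (hg x)

/-- (n = 3) If u is smooth, 1-periodic in x and satisfies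
∂ₜ∂ₓ²u + u ∂ₓ³u = 0, then sup_x |∂ₓ²u(x,t)| is constant in time. -/
theorem sup_norm_of_uxx_conserved
    (T : ℝ) (hT : 0 < T)
    (u γ : ℝ → ℝ → ℝ)
    (hu : ContDiff ℝ (⊤ : ℕ∞) (fun z : ℝ × ℝ => u z.1 z.2))
    (hper : ∀ x t, u (x + 1) t = u x t)
    (heq : ∀ x : ℝ, ∀ t ∈ Ico (0:ℝ) T,
      deriv (fun τ => deriv (deriv (fun y => u y τ)) x) t
        + u x t * deriv (deriv (deriv (fun y => u y t))) x = 0)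
    (hγ0 : ∀ x, γ x 0 = x)
    (hflow : ∀ x : ℝ, ∀ t ∈ Ico (0:ℝ) T, HasDerivAt (fun τ => γ x τ) (u (γ x t) t) t)
    (hγdiffeo : ∀ t ∈ Ico (0:ℝ) T, Function.Bijective (fun y => γ y t) ∧
      ContDiff ℝ 1 (fun y => γ y t) ∧ ∀ x, γ (x + 1) t = γ x t + 1) :
    ∀ t₁ ∈ Ico (0:ℝ) T, ∀ t₂ ∈ Ico (0:ℝ) T,
      sSup ((fun x => |deriv (deriv (fun y => u y t₁)) x|) '' Icc (0:ℝ) 1)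
        = sSup ((fun x => |deriv (deriv (fun y => u y t₂)) x|) '' Icc (0:ℝ) 1) := by
  classical
  set F : ℝ × ℝ → ℝ := fun z => u z.1 z.2 with hF
  set W1 : ℝ × ℝ → ℝ := fun z => fderiv ℝ F z (1, 0) with hW1
  have hW1s : ContDiff ℝ (⊤ : ℕ∞) W1 := (hu.fderiv_right (by simp)).clm_apply contDiff_const
  set W2 : ℝ × ℝ → ℝ := fun z => fderiv ℝ W1 z (1, 0) with hW2
  have hW2s : ContDiff ℝ (⊤ : ℕ∞) W2 := (hW1s.fderiv_right (by simp)).clm_apply contDiff_const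
  have hW2diff : Differentiable ℝ W2 := hW2s.differentiable (by simp)
  -- first x-derivative
  have hd1 : ∀ x t : ℝ, HasDerivAt (fun y => u y t) (W1 (x, t)) x := by
    intro x t
    exact ((hu.differentiable (by simp)) (x, t)).hasFDerivAt.comp_hasDerivAt x
      (HasDerivAt.prodMk (hasDerivAt_id x) (hasDerivAt_const x t))
  have hD1 : ∀ t, deriv (fun y => u y t) = fun y => W1 (y, t) :=
    fun t => funext fun x => (hd1 x t).deriv
  -- second x-derivative
  have hd2 : ∀ x t : ℝ, HasDerivAt (fun y => W1 (y, t)) (W2 (x, t)) x := by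
    intro x t
    exact ((hW1s.differentiable (by simp)) (x, t)).hasFDerivAt.comp_hasDerivAt x
      (HasDerivAt.prodMk (hasDerivAt_id x) (hasDerivAt_const x t))
  have hD2 : ∀ x t : ℝ, deriv (deriv (fun y => u y t)) x = W2 (x, t) := by
    intro x t
    rw [hD1 t]
    exact (hd2 x t).deriv
  -- partial derivatives of W2
  have hd3x : ∀ x t : ℝ, HasDerivAt (fun y => W2 (y, t)) (fderiv ℝ W2 (x, t) (1, 0)) x := by
    intro x t
    exact (hW2diff (x, t)).hasFDerivAt.comp_hasDerivAt x
      (HasDerivAt.prodMk (hasDerivAt_id x) (hasDerivAt_const x t))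
  have hd3t : ∀ x t : ℝ, HasDerivAt (fun τ => W2 (x, τ)) (fderiv ℝ W2 (x, t) (0, 1)) t := by
    intro x t
    exact (hW2diff (x, t)).hasFDerivAt.comp_hasDerivAt t
      (HasDerivAt.prodMk (hasDerivAt_const t x) (hasDerivAt_id t))
  -- the PDE in terms of W2
  have heq' : ∀ x : ℝ, ∀ t ∈ Ico (0:ℝ) T,
      fderiv ℝ W2 (x, t) (0, 1) + u x t * fderiv ℝ W2 (x, t) (1, 0) = 0 := by
    intro x t ht
    have key := heq x t ht
    rw [show (fun τ => deriv (deriv (fun y => u y τ)) x) = fun τ => W2 (x, τ) from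
        funext fun τ => hD2 x τ,
      show deriv (deriv (fun y => u y t)) = fun y => W2 (y, t) from
        funext fun y => hD2 y t,
      (hd3t x t).deriv, (hd3x x t).deriv] at key
    exact key
  -- transport along the flow
  have htrans : ∀ t ∈ Ico (0:ℝ) T, ∀ x, W2 (γ x t, t) = W2 (x, 0) := by
    intro t ht x
    have hder : ∀ s ∈ Ico (0:ℝ) T, HasDerivAt (fun τ => W2 (γ x τ, τ)) 0 s := by
      intro s hs
      have hpair : HasDerivAt (fun τ => (γ x τ, τ)) (u (γ x s) s, 1) s :=
        HasDerivAt.prodMk (hflow x s hs) (hasDerivAt_id s)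
      have hcomp : HasDerivAt (fun τ => W2 (γ x τ, τ))
          (fderiv ℝ W2 (γ x s, s) (u (γ x s) s, 1)) s :=
        HasFDerivAt.comp_hasDerivAt_of_eq s (hW2diff (γ x s, s)).hasFDerivAt hpair rfl
      have hval : fderiv ℝ W2 (γ x s, s) (u (γ x s) s, 1) = 0 := by
        have h2 := heq' (γ x s) s hs
        have hv : ((u (γ x s) s, (1:ℝ)) : ℝ × ℝ)
            = u (γ x s) s • ((1:ℝ), (0:ℝ)) + ((0:ℝ), (1:ℝ)) := by
          simp [Prod.ext_iff]
        rw [hv, (fderiv ℝ W2 (γ x s, s)).map_add, (fderiv ℝ W2 (γ x s, s)).map_smul,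
          smul_eq_mul]
        linarith
      rwa [hval] at hcomp
    have hcst := constant_of_has_deriv_right_zero
      (f := fun τ => W2 (γ x τ, τ)) (a := 0) (b := t)
      (fun s hs => ((hder s ⟨hs.1, lt_of_le_of_lt hs.2 ht.2⟩).continuousAt).continuousWithinAt)
      (fun s hs => (hder s ⟨hs.1, lt_of_lt_of_le hs.2 ht.2.le⟩).hasDerivWithinAt)
    have := hcst t ⟨ht.1, le_refl t⟩
    simpa [hγ0 x] using this
  -- periodicity of W2 in x
  have hperW1 : ∀ x t : ℝ, W1 (x + 1, t) = W1 (x, t) := by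
    intro x t
    exact aux_deriv_periodic (g := fun y => u y t) (fun y => hd1 y t) (fun y => hper y t) x
  have hperW2 : ∀ x t : ℝ, W2 (x + 1, t) = W2 (x, t) := by
    intro x t
    exact aux_deriv_periodic (g := fun y => W1 (y, t)) (fun y => hd2 y t)
      (fun y => hperW1 y t) x
  -- the image set equals a fixed set independent of t
  have hset : ∀ t ∈ Ico (0:ℝ) T,
      (fun x => |W2 (x, t)|) '' Icc (0:ℝ) 1 = Set.range (fun x => |W2 (x, 0)|) := by
    intro t ht
    have habs : Function.Periodic (fun x => |W2 (x, t)|) 1 := fun x => by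
      simp only [hperW2 x t]
    have h1 : (fun x => |W2 (x, t)|) '' Icc (0:ℝ) 1 = Set.range (fun x => |W2 (x, t)|) := by
      apply Subset.antisymm (image_subset_range _ _)
      rintro y ⟨x, rfl⟩
      refine ⟨Int.fract x, ⟨Int.fract_nonneg x, (Int.fract_lt_one x).le⟩, ?_⟩
      have hfr : Int.fract x = x - (⌊x⌋ : ℝ) * 1 := by rw [mul_one]; rfl
      show |W2 (Int.fract x, t)| = |W2 (x, t)|
      rw [hfr]
      exact habs.sub_int_mul_eq ⌊x⌋
    have hsurj : Function.Surjective (fun y => γ y t) := (hγdiffeo t ht).1.2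
    have h2 : Set.range ((fun y => |W2 (y, t)|) ∘ (fun y => γ y t))
        = Set.range (fun y => |W2 (y, t)|) := hsurj.range_comp _
    have h3 : ((fun y => |W2 (y, t)|) ∘ (fun y => γ y t)) = fun x => |W2 (x, 0)| :=
      funext fun x => by
        show |W2 (γ x t, t)| = |W2 (x, 0)|
        rw [htrans t ht x]
    rw [h1, ← h2, h3]
  -- conclude
  intro t₁ ht₁ t₂ ht₂
  have hrw : ∀ t : ℝ, (fun x => |deriv (deriv (fun y => u y t)) x|) = fun x => |W2 (x, t)| :=
    fun t => funext fun x => by rw [hD2 x t]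
  rw [hrw t₁, hrw t₂, hset t₁ ht₁, hset t₂ ht₂]
end

section
/- Let n > 3 and let X : ℝ → ℝ be a C³ 1-periodic function satisfying λ X″ + ((n−3)/(n−1)) X′ X″ + X X‴ = 0 for a constant λ ≠ 0. Then ∫₀¹ |X″(x)|^{(n−1)/(n−3)} dx = 0, hence X″ ≡ 0 and X is affine (hence constant by periodicity of X′ and X). -/
open Real Filter Topology MeasureTheory Set intervalIntegral

/-- For n > 3, a C³ 1-periodic X satisfying
λ X″ + ((n−3)/(n−1)) X′ X″ + X X‴ = 0 with λ ≠ 0 has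
∫₀¹ |X″|^{(n−1)/(n−3)} = 0, hence X″ ≡ 0 and X is constant. -/
theorem separable_solution_trivial
    (n : ℕ) (hn : 3 < n) (lam : ℝ) (hlam : lam ≠ 0)
    (X : ℝ → ℝ) (hX : ContDiff ℝ 3 X) (hper : ∀ x, X (x + 1) = X x)
    (hODE : ∀ x : ℝ,
      lam * deriv (deriv X) x
        + (((n:ℝ) - 3) / ((n:ℝ) - 1)) * deriv X x * deriv (deriv X) x
        + X x * deriv (deriv (deriv X)) x = 0) :
    (∫ x in (0:ℝ)..1, |deriv (deriv X) x| ^ ((((n:ℝ) - 1) / ((n:ℝ) - 3)) : ℝ)) = 0 ∧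
    (∀ x : ℝ, deriv (deriv X) x = 0) ∧
    (∃ c : ℝ, ∀ x : ℝ, X x = c) := by
  have hn3 : (3:ℝ) < (n:ℝ) := by exact_mod_cast hn
  set p : ℝ := (((n:ℝ) - 1) / ((n:ℝ) - 3)) with hp_def
  have hn3' : (0:ℝ) < (n:ℝ) - 3 := by linarith
  have hp1 : 1 < p := by rw [hp_def, lt_div_iff₀ hn3']; linarith
  have hp0 : p ≠ 0 := by intro h; rw [h] at hp1; linarith
  have hppos : (0:ℝ) < p := by linarith
  -- regularity of derivatives
  have hX2' : ContDiff ℝ 2 (deriv X) := by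
    have h := contDiff_succ_iff_deriv.mp (show ContDiff ℝ (2+1) X by exact_mod_cast hX)
    exact h.2.2
  have hX1' : ContDiff ℝ 1 (deriv (deriv X)) := by
    have h := contDiff_succ_iff_deriv.mp (show ContDiff ℝ (1+1) (deriv X) by exact_mod_cast hX2')
    exact h.2.2
  have h1 : Differentiable ℝ X := hX.differentiable (by norm_num)
  have h2 : Differentiable ℝ (deriv X) := hX2'.differentiable (by norm_num)
  have h3 : Differentiable ℝ (deriv (deriv X)) := hX1'.differentiable (by norm_num)
  have hc2 : Continuous (deriv (deriv X)) := h3.continuous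
  -- periodicity of derivatives
  have hper1 : ∀ x, deriv X (x + 1) = deriv X x := by
    intro x
    have he : (fun y => X (y + 1)) = X := funext hper
    calc deriv X (x + 1) = deriv (fun y => X (y + 1)) x := (deriv_comp_add_const X 1 x).symm
      _ = deriv X x := by rw [he]
  have hper2 : ∀ x, deriv (deriv X) (x + 1) = deriv (deriv X) x := by
    intro x
    have he : (fun y => deriv X (y + 1)) = deriv X := funext hper1
    calc deriv (deriv X) (x + 1) = deriv (fun y => deriv X (y + 1)) x :=
          (deriv_comp_add_const (deriv X) 1 x).symm
      _ = deriv (deriv X) x := by rw [he]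
  -- continuity of the integrand
  have hcontabs : Continuous (fun x => |deriv (deriv X) x| ^ p) :=
    (hc2.abs).rpow_const (fun x => Or.inr (le_of_lt hppos))
  -- the key derivative computation
  have hGd : ∀ x : ℝ, HasDerivAt (fun y => X y * |deriv (deriv X) y| ^ p)
      (-(lam * p) * |deriv (deriv X) x| ^ p) x := by
    intro x
    have habs : HasDerivAt (fun y => |deriv (deriv X) y| ^ p)
        ((p * |deriv (deriv X) x| ^ (p - 2) * deriv (deriv X) x) * deriv (deriv (deriv X)) x)
        x := (hasDerivAt_abs_rpow (deriv (deriv X) x) hp1).comp x (h3 x).hasDerivAt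
    have hprod : HasDerivAt (fun y => X y * |deriv (deriv X) y| ^ p)
        (deriv X x * |deriv (deriv X) x| ^ p +
          X x * (p * |deriv (deriv X) x| ^ (p - 2) * deriv (deriv X) x * deriv (deriv (deriv X)) x))
        x := ((h1 x).hasDerivAt).mul habs
    convert hprod using 1
    set t := deriv (deriv X) x with ht
    have hBA : |t| ^ (p - 2) * t * t = |t| ^ p := by
      rcases eq_or_ne t 0 with h0 | h0
      · simp [h0, Real.zero_rpow hp0]
      · have habs0 : (0:ℝ) < |t| := abs_pos.mpr h0
        have h2' : |t| * |t| = |t| ^ (2:ℝ) := by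
          rw [show (2:ℝ) = ((2:ℕ):ℝ) by norm_num, Real.rpow_natCast]; ring
        rw [mul_assoc, ← abs_mul_abs_self t, h2', ← Real.rpow_add habs0]
        norm_num
    have hcoef : (((n:ℝ) - 3) / ((n:ℝ) - 1)) = 1 / p := by
      rw [hp_def, one_div_div]
    have hode := hODE x
    rw [hcoef] at hode
    have hXX3 : p * (X x * deriv (deriv (deriv X)) x)
        = -(p * lam * t) - deriv X x * t := by
      field_simp at hode
      nlinarith [hode]
    linear_combination (-( |t| ^ (p - 2) * t)) * hXX3 + (p * lam + deriv X x) * hBA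
  -- FTC over one period
  have hintc : Continuous (fun x => -(lam * p) * |deriv (deriv X) x| ^ p) :=
    continuous_const.mul hcontabs
  have hint : (∫ x in (0:ℝ)..1, -(lam * p) * |deriv (deriv X) x| ^ p)
      = X 1 * |deriv (deriv X) 1| ^ p - X 0 * |deriv (deriv X) 0| ^ p :=
    intervalIntegral.integral_eq_sub_of_hasDerivAt (fun x _ => hGd x)
      (hintc.intervalIntegrable 0 1)
  have hper0 : X 1 = X 0 := by simpa using hper 0
  have hper20 : deriv (deriv X) 1 = deriv (deriv X) 0 := by simpa using hper2 0
  have hintegral0 : (∫ x in (0:ℝ)..1, |deriv (deriv X) x| ^ p) = 0 := by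
    have h' : (-(lam * p)) * (∫ x in (0:ℝ)..1, |deriv (deriv X) x| ^ p) = 0 := by
      rw [← intervalIntegral.integral_const_mul, hint, hper0, hper20]; ring
    have hne : -(lam * p) ≠ 0 := by
      simp only [neg_ne_zero]; exact mul_ne_zero hlam hp0
    exact (mul_eq_zero.mp h').resolve_left hne
  -- pointwise vanishing on (0,1)
  have hH : ∀ t : ℝ, HasDerivAt (fun u => ∫ x in (0:ℝ)..u, |deriv (deriv X) x| ^ p)
      (|deriv (deriv X) t| ^ p) t :=
    fun t => (hcontabs.integral_hasStrictDerivAt 0 t).hasDerivAt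
  have hzeroH : ∀ u ∈ Icc (0:ℝ) 1, (∫ x in (0:ℝ)..u, |deriv (deriv X) x| ^ p) = 0 := by
    intro u hu
    have hnn : (0:ℝ) ≤ ∫ x in (0:ℝ)..u, |deriv (deriv X) x| ^ p :=
      intervalIntegral.integral_nonneg hu.1 (fun x _ => Real.rpow_nonneg (abs_nonneg _) _)
    have hnn2 : (0:ℝ) ≤ ∫ x in u..1, |deriv (deriv X) x| ^ p :=
      intervalIntegral.integral_nonneg hu.2 (fun x _ => Real.rpow_nonneg (abs_nonneg _) _)
    have hup : (∫ x in (0:ℝ)..u, |deriv (deriv X) x| ^ p)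
        + (∫ x in u..1, |deriv (deriv X) x| ^ p)
        = ∫ x in (0:ℝ)..1, |deriv (deriv X) x| ^ p :=
      intervalIntegral.integral_add_adjacent_intervals
        (hcontabs.intervalIntegrable _ _) (hcontabs.intervalIntegrable _ _)
    rw [hintegral0] at hup
    linarith
  have hIoo : ∀ t ∈ Ioo (0:ℝ) 1, deriv (deriv X) t = 0 := by
    intro t ht
    have hev : (fun u => ∫ x in (0:ℝ)..u, |deriv (deriv X) x| ^ p) =ᶠ[𝓝 t] (fun _ => 0) := by
      filter_upwards [Ioo_mem_nhds ht.1 ht.2] with u hu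
      exact hzeroH u (Ioo_subset_Icc_self hu)
    have hd0 : deriv (fun u => ∫ x in (0:ℝ)..u, |deriv (deriv X) x| ^ p) t = 0 := by
      rw [hev.deriv_eq]; simp
    have hdd := (hH t).deriv
    rw [hd0] at hdd
    have habs : |deriv (deriv X) t| = 0 := by
      have h0 : |deriv (deriv X) t| ^ p = 0 := hdd.symm
      exact (Real.rpow_eq_zero (abs_nonneg _) hp0).mp h0
    simpa using habs
  -- vanishing on [0,1] by continuity, then everywhere by periodicity
  have hIcc : ∀ t ∈ Icc (0:ℝ) 1, deriv (deriv X) t = 0 := by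
    have hclosed : IsClosed {t : ℝ | deriv (deriv X) t = 0} := isClosed_eq hc2 continuous_const
    intro t ht
    have hsub : Icc (0:ℝ) 1 ⊆ {t : ℝ | deriv (deriv X) t = 0} := by
      rw [show Icc (0:ℝ) 1 = closure (Ioo (0:ℝ) 1) by rw [closure_Ioo]; norm_num]
      exact closure_minimal (fun u hu => hIoo u hu) hclosed
    exact hsub ht
  have hX2zero : ∀ x : ℝ, deriv (deriv X) x = 0 := by
    intro x
    have hP : Function.Periodic (deriv (deriv X)) 1 := hper2
    have hshift := (hP.int_mul ⌊x⌋) (Int.fract x)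
    rw [mul_one, Int.fract_add_floor] at hshift
    rw [hshift]
    exact hIcc _ ⟨Int.fract_nonneg x, le_of_lt (Int.fract_lt_one x)⟩
  -- X is constant
  have hX1const : ∀ x, deriv X x = deriv X 0 :=
    fun x => is_const_of_deriv_eq_zero h2 hX2zero x 0
  have hgd : ∀ x, deriv (fun y => X y - deriv X 0 * y) x = 0 := by
    intro x
    have hg : HasDerivAt (fun y => X y - deriv X 0 * y) (deriv X x - deriv X 0 * 1) x :=
      ((h1 x).hasDerivAt).sub ((hasDerivAt_id x).const_mul (deriv X 0))
    rw [hg.deriv, hX1const x]; ring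
  have hgdiff : Differentiable ℝ (fun y => X y - deriv X 0 * y) :=
    h1.sub (differentiable_id.const_mul (deriv X 0))
  have hgconst := is_const_of_deriv_eq_zero hgdiff hgd 1 0
  simp only [mul_one, mul_zero, sub_zero] at hgconst
  have hc0 : deriv X 0 = 0 := by
    have h10 : X 1 = X 0 := hper0
    linarith
  refine ⟨hintegral0, hX2zero, ⟨X 0, fun x => ?_⟩⟩
  exact is_const_of_deriv_eq_zero h1 (fun y => by rw [hX1const y, hc0]) x 0
end

section
/- Along trajectories of the system ṗ = (1/(n−1))(p² + n pq), q̇ = (1/(n−1))(q² + n pq) with p > 0 > q, the radius satisfies r(θ) = c |cos θ sin θ|^{1/(n−1)} |cos θ − sin θ|^{−(n+1)/(n−1)} for some constant c > 0; that is, the quantity r · |cos θ sin θ|^{−1/(n−1)} · |cos θ − sin θ|^{(n+1)/(n−1)} is a first integral of the system on the region p > 0 > q. -/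
/-! In Cartesian coordinates the quantity is `F(p, q) = |pq|^(-a) |p - q|^b` with
`a = 1/(n-1)`, `b = (n+1)/(n-1)`. Since `F` is homogeneous of degree `b - 2a = 1`,
`r F(cos θ, sin θ) = F(p, q)`. For `ṗ = c(p² + mpq)`, `q̇ = c(q² + mpq)` the logarithmic
derivatives of `p`, `q`, `p - q` are `c(p + mq)`, `c(q + mp)`, `c(p + q)`, so
`(log F)' = c(b - a(1 + m))(p + q)`, which vanishes for `b = a(1 + m)`, here `m = n`. -/

open Real Filter Topology MeasureTheory Set intervalIntegral

noncomputable def cartesianIntegral (a b x y : ℝ) : ℝ := |x * y| ^ (-a) * |x - y| ^ b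

section CartesianIntegral

variable {a b x y : ℝ}

theorem cartesianIntegral_mul_left {r : ℝ} (hr : 0 < r) (x y : ℝ) :
    cartesianIntegral a b (r * x) (r * y) = r ^ (b - 2 * a) * cartesianIntegral a b x y := by
  have hsq : |r * x * (r * y)| = r ^ (2 : ℝ) * |x * y| := by
    rw [rpow_two, show r * x * (r * y) = r ^ 2 * (x * y) by ring, abs_mul,
      abs_of_pos (by positivity : 0 < r ^ 2)]
  have hsub : |r * x - r * y| = r * |x - y| := by
    rw [← mul_sub, abs_mul, abs_of_pos hr]
  rw [cartesianIntegral, cartesianIntegral, hsq, hsub,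
    mul_rpow (by positivity) (abs_nonneg _), mul_rpow hr.le (abs_nonneg _),
    ← rpow_mul hr.le, show b - 2 * a = 2 * -a + b by ring, rpow_add hr]
  ring

theorem cartesianIntegral_pos (hx : x ≠ 0) (hy : y ≠ 0) (hxy : x ≠ y) :
    0 < cartesianIntegral a b x y :=
  mul_pos (rpow_pos_of_pos (by positivity) _)
    (rpow_pos_of_pos (abs_pos.mpr (sub_ne_zero.mpr hxy)) _)

-- `Real.log` is even (`log x = log |x|`), so only nonvanishing is needed, not signs.
theorem log_cartesianIntegral (hx : x ≠ 0) (hy : y ≠ 0) (hxy : x ≠ y) :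
    log (cartesianIntegral a b x y) = -a * log x - a * log y + b * log (x - y) := by
  have hxy' : x - y ≠ 0 := sub_ne_zero.mpr hxy
  rw [cartesianIntegral, log_mul (by positivity) (by positivity),
    log_rpow (by positivity), log_rpow (by positivity), log_abs, log_abs,
    log_mul hx hy]
  ring

end CartesianIntegral

theorem Set.OrdConnected.eq_of_hasDerivAt_zero {I : Set ℝ} (hI : I.OrdConnected) {f : ℝ → ℝ}
    (hf : ∀ t ∈ I, HasDerivAt f 0 t) {t₁ t₂ : ℝ} (h₁ : t₁ ∈ I) (h₂ : t₂ ∈ I) :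
    f t₁ = f t₂ := by
  have := hI.convex.norm_image_sub_le_of_norm_hasDerivWithin_le
    (fun t ht => (hf t ht).hasDerivWithinAt) (fun _ _ => le_of_eq norm_zero) h₂ h₁
  rwa [zero_mul, norm_le_zero_iff, sub_eq_zero] at this

theorem hasDerivAt_log_cartesianIntegral_eq_zero {p q : ℝ → ℝ} {a c m t : ℝ}
    (hp0 : p t ≠ 0) (hq0 : q t ≠ 0) (hpq : p t ≠ q t)
    (hp : HasDerivAt p (c * (p t ^ 2 + m * p t * q t)) t)
    (hq : HasDerivAt q (c * (q t ^ 2 + m * p t * q t)) t) :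
    HasDerivAt (fun s => -a * log (p s) - a * log (q s) + a * (1 + m) * log (p s - q s)) 0 t := by
  have hpq' : p t - q t ≠ 0 := sub_ne_zero.mpr hpq
  refine ((((hp.log hp0).const_mul (-a)).sub ((hq.log hq0).const_mul a)).add
    (((hp.sub hq).log hpq').const_mul (a * (1 + m)))).congr_deriv ?_
  rw [Pi.sub_apply]
  field_simp
  ring

theorem cartesianIntegral_eq_of_hasDerivAt {I : Set ℝ} (hI : I.OrdConnected) {p q : ℝ → ℝ}
    {a c m : ℝ} (hp0 : ∀ t ∈ I, p t ≠ 0) (hq0 : ∀ t ∈ I, q t ≠ 0)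
    (hpq : ∀ t ∈ I, p t ≠ q t)
    (hp : ∀ t ∈ I, HasDerivAt p (c * (p t ^ 2 + m * p t * q t)) t)
    (hq : ∀ t ∈ I, HasDerivAt q (c * (q t ^ 2 + m * p t * q t)) t)
    {t₁ t₂ : ℝ} (h₁ : t₁ ∈ I) (h₂ : t₂ ∈ I) :
    cartesianIntegral a (a * (1 + m)) (p t₁) (q t₁) =
      cartesianIntegral a (a * (1 + m)) (p t₂) (q t₂) := by
  refine log_injOn_pos (cartesianIntegral_pos (hp0 t₁ h₁) (hq0 t₁ h₁) (hpq t₁ h₁))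
    (cartesianIntegral_pos (hp0 t₂ h₂) (hq0 t₂ h₂) (hpq t₂ h₂)) ?_
  rw [log_cartesianIntegral (hp0 t₁ h₁) (hq0 t₁ h₁) (hpq t₁ h₁),
    log_cartesianIntegral (hp0 t₂ h₂) (hq0 t₂ h₂) (hpq t₂ h₂)]
  exact hI.eq_of_hasDerivAt_zero (fun t ht => hasDerivAt_log_cartesianIntegral_eq_zero
    (hp0 t ht) (hq0 t ht) (hpq t ht) (hp t ht) (hq t ht)) h₁ h₂

theorem polar_first_integral_general
    (n : ℕ) (hn : 2 ≤ n)
    (I : Set ℝ) (hI : I.OrdConnected)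
    (p q r θ : ℝ → ℝ)
    (hsign : ∀ t ∈ I, p t > 0 ∧ q t < 0)
    (hr : ∀ t, r t = Real.sqrt ((p t) ^ 2 + (q t) ^ 2))
    (hpr : ∀ t ∈ I, p t = r t * Real.cos (θ t))
    (hqr : ∀ t ∈ I, q t = r t * Real.sin (θ t))
    (hp : ∀ t ∈ I, HasDerivAt p ((1 / ((n:ℝ) - 1)) * ((p t) ^ 2 + (n:ℝ) * p t * q t)) t)
    (hq : ∀ t ∈ I, HasDerivAt q ((1 / ((n:ℝ) - 1)) * ((q t) ^ 2 + (n:ℝ) * p t * q t)) t) :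
    ∀ t₁ ∈ I, ∀ t₂ ∈ I,
      r t₁ * |Real.cos (θ t₁) * Real.sin (θ t₁)| ^ ((-(1 / ((n:ℝ) - 1))) : ℝ)
          * |Real.cos (θ t₁) - Real.sin (θ t₁)| ^ (((((n:ℝ) + 1) / ((n:ℝ) - 1))) : ℝ)
        = r t₂ * |Real.cos (θ t₂) * Real.sin (θ t₂)| ^ ((-(1 / ((n:ℝ) - 1))) : ℝ)
          * |Real.cos (θ t₂) - Real.sin (θ t₂)| ^ (((((n:ℝ) + 1) / ((n:ℝ) - 1))) : ℝ) := by
  intro t₁ ht₁ t₂ ht₂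
  have hn1 : (n : ℝ) - 1 ≠ 0 := by
    have : (2 : ℝ) ≤ n := by exact_mod_cast hn
    linarith
  set a := 1 / ((n : ℝ) - 1) with ha
  have hb : ((n : ℝ) + 1) / ((n : ℝ) - 1) = a * (1 + n) := by rw [ha]; field_simp; ring
  have hdeg : a * (1 + n) - 2 * a = 1 := by rw [ha]; field_simp; ring
  have polar : ∀ t ∈ I,
      r t * |cos (θ t) * sin (θ t)| ^ (-a) * |cos (θ t) - sin (θ t)| ^ (a * (1 + n)) =
        cartesianIntegral a (a * (1 + n)) (p t) (q t) := by
    intro t ht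
    have hr0 : 0 < r t := by rw [hr]; exact sqrt_pos.mpr (by nlinarith [(hsign t ht).1])
    rw [hpr t ht, hqr t ht, cartesianIntegral_mul_left hr0, hdeg, rpow_one, cartesianIntegral,
      mul_assoc]
  rw [hb, polar t₁ ht₁, polar t₂ ht₂]
  exact cartesianIntegral_eq_of_hasDerivAt hI (fun t ht => (hsign t ht).1.ne')
    (fun t ht => (hsign t ht).2.ne) (fun t ht => ((hsign t ht).2.trans (hsign t ht).1).ne')
    hp hq ht₁ ht₂

/-- On the region p > 0 > q, the quantity
r · |cos θ sin θ|^{−1/(n−1)} · |cos θ − sin θ|^{(n+1)/(n−1)}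
is a first integral of ṗ = (1/(n−1))(p² + n p q), q̇ = (1/(n−1))(q² + n p q);
equivalently r(θ) = c |cos θ sin θ|^{1/(n−1)} |cos θ − sin θ|^{−(n+1)/(n−1)}. -/
theorem polar_first_integral
    (n : ℕ) (hn : 2 ≤ n)
    (I : Set ℝ) (hI : I.OrdConnected)
    (p q r θ : ℝ → ℝ)
    (hsign : ∀ t ∈ I, p t > 0 ∧ q t < 0)
    (hr : ∀ t, r t = Real.sqrt ((p t) ^ 2 + (q t) ^ 2))
    (hθ : ∀ t ∈ I, θ t ∈ Ioo (-(Real.pi / 2)) (0:ℝ))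
    (hpr : ∀ t ∈ I, p t = r t * Real.cos (θ t))
    (hqr : ∀ t ∈ I, q t = r t * Real.sin (θ t))
    (hθd : ∀ t ∈ I, DifferentiableAt ℝ θ t)
    (hp : ∀ t ∈ I, HasDerivAt p ((1 / ((n:ℝ) - 1)) * ((p t) ^ 2 + (n:ℝ) * p t * q t)) t)
    (hq : ∀ t ∈ I, HasDerivAt q ((1 / ((n:ℝ) - 1)) * ((q t) ^ 2 + (n:ℝ) * p t * q t)) t) :
    ∀ t₁ ∈ I, ∀ t₂ ∈ I,
      r t₁ * |Real.cos (θ t₁) * Real.sin (θ t₁)| ^ ((-(1 / ((n:ℝ) - 1))) : ℝ)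
          * |Real.cos (θ t₁) - Real.sin (θ t₁)| ^ (((((n:ℝ) + 1) / ((n:ℝ) - 1))) : ℝ)
        = r t₂ * |Real.cos (θ t₂) * Real.sin (θ t₂)| ^ ((-(1 / ((n:ℝ) - 1))) : ℝ)
          * |Real.cos (θ t₂) - Real.sin (θ t₂)| ^ (((((n:ℝ) + 1) / ((n:ℝ) - 1))) : ℝ) :=
  polar_first_integral_general n hn I hI p q r θ hsign hr hpr hqr hp hq
end

section
/- Every solution (p(t), q(t)) of ṗ = (1/(n−1))(p² + n p q), q̇ = (1/(n−1))(q² + n p q) with initial data p(0) > 0 > q(0) exists for all t ∈ ℝ, satisfies p(t) > 0 > q(t) for all t, and (p(t), q(t)) → (0,0) as t → ±∞. -/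
open Real Filter Topology MeasureTheory Set intervalIntegral


lemma one_dim_sol (m A u₀ : ℝ) (hm : 1 ≤ m) (hA : 0 < A) (hu₀ : u₀ ∈ Set.Ioo (0:ℝ) 1) :
    ∃ u : ℝ → ℝ, u 0 = u₀ ∧ (∀ t, u t ∈ Set.Ioo (0:ℝ) 1) ∧
      (∀ t, HasDerivAt u (-(A * (u t * (1 - u t)) ^ ((1:ℝ) + 1/m))) t) ∧
      Tendsto u atTop (𝓝 0) ∧ Tendsto u atBot (𝓝 1) := by
  have hm0 : (0:ℝ) < m := lt_of_lt_of_le one_pos hm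
  set α : ℝ := 1 + 1/m with hα_def
  have hα1 : 1 < α := by
    have : 0 < 1/m := by positivity
    simp [hα_def]; linarith
  have hα0 : 0 < α := by linarith
  set g : ℝ → ℝ := fun v => (A * (v * (1 - v)) ^ α)⁻¹ with hg_def
  have hXpos : ∀ v ∈ Set.Ioo (0:ℝ) 1, 0 < v * (1 - v) := by
    rintro v ⟨h1, h2⟩; nlinarith
  have hgpos : ∀ v ∈ Set.Ioo (0:ℝ) 1, 0 < g v := by
    intro v hv
    have := hXpos v hv
    have : 0 < A * (v * (1 - v)) ^ α := by positivity
    exact inv_pos.2 this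
  have hgcont : ContinuousOn g (Set.Ioo (0:ℝ) 1) := by
    have hbase : Continuous fun v : ℝ => v * (1 - v) := by continuity
    have hrp : Continuous fun v : ℝ => (v * (1 - v)) ^ α := by
      rw [continuous_iff_continuousAt]
      intro x
      exact (Real.continuousAt_rpow_const _ _ (Or.inr hα0.le)).comp hbase.continuousAt
    apply ContinuousOn.inv₀ ((continuous_const.mul hrp).continuousOn)
    intro v hv
    have := hXpos v hv
    exact ne_of_gt (mul_pos hA (Real.rpow_pos_of_pos this _))
  have hsub : ∀ a ∈ Set.Ioo (0:ℝ) 1, ∀ b ∈ Set.Ioo (0:ℝ) 1,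
      Set.uIcc a b ⊆ Set.Ioo (0:ℝ) 1 := fun a ha b hb =>
    (Set.ordConnected_Ioo).uIcc_subset ha hb
  have hgint : ∀ a ∈ Set.Ioo (0:ℝ) 1, ∀ b ∈ Set.Ioo (0:ℝ) 1,
      IntervalIntegrable g volume a b := by
    intro a ha b hb
    exact (hgcont.mono (hsub a ha b hb)).intervalIntegrable
  set F : ℝ → ℝ := fun w => ∫ v in u₀..w, g v with hF_def
  have hFderiv : ∀ w ∈ Set.Ioo (0:ℝ) 1, HasDerivAt F (g w) w := by
    intro w hw
    exact intervalIntegral.integral_hasDerivAt_right (hgint u₀ hu₀ w hw)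
      (ContinuousOn.stronglyMeasurableAtFilter isOpen_Ioo hgcont w hw)
      (hgcont.continuousAt (isOpen_Ioo.mem_nhds hw))
  have hFadd : ∀ a ∈ Set.Ioo (0:ℝ) 1, ∀ b ∈ Set.Ioo (0:ℝ) 1,
      F b = F a + ∫ v in a..b, g v := by
    intro a ha b hb
    rw [hF_def]
    exact (intervalIntegral.integral_add_adjacent_intervals (hgint u₀ hu₀ a ha)
      (hgint a ha b hb)).symm
  have hFmono : StrictMonoOn F (Set.Ioo (0:ℝ) 1) := by
    intro a ha b hb hab
    rw [hFadd a ha b hb]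
    have hpos : 0 < ∫ v in a..b, g v := by
      apply intervalIntegral.intervalIntegral_pos_of_pos_on (hgint a ha b hb) _ hab
      intro x hx
      exact hgpos x ⟨lt_trans ha.1 hx.1, lt_trans hx.2 hb.2⟩
    linarith
  -- lower divergence: F w → -∞ as w → 0⁺
  have hlowint : ∀ w ∈ Set.Ioo (0:ℝ) 1,
      IntervalIntegrable (fun v : ℝ => A⁻¹ * v ^ (-α)) volume w u₀ := by
    intro w hw
    apply ContinuousOn.intervalIntegrable
    intro v hv
    have hv0 : 0 < v := (hsub w hw u₀ hu₀ hv).1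
    have : ContinuousAt (fun v : ℝ => A⁻¹ * v ^ (-α)) v :=
      continuousAt_const.mul (Real.continuousAt_rpow_const v (-α) (Or.inl (ne_of_gt hv0)))
    exact this.continuousWithinAt
  have hlowbound : ∀ w ∈ Set.Ioo (0:ℝ) 1, w ≤ u₀ →
      A⁻¹ * ((w ^ (1-α) - u₀ ^ (1-α)) / (α - 1)) ≤ -F w := by
    intro w hw hwu
    have hFw : F w = -∫ v in w..u₀, g v := intervalIntegral.integral_symm w u₀
    rw [hFw, neg_neg]
    have hmono : (∫ v in w..u₀, A⁻¹ * v ^ (-α)) ≤ ∫ v in w..u₀, g v := by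
      apply intervalIntegral.integral_mono_on hwu (hlowint w hw) (hgint w hw u₀ hu₀)
      intro v hv
      have hv1 : v ∈ Set.Ioo (0:ℝ) 1 := ⟨lt_of_lt_of_le hw.1 hv.1, lt_of_le_of_lt hv.2 hu₀.2⟩
      have hv0 : 0 < v := hv1.1
      have hv2 : v < 1 := hv1.2
      have e1 : A⁻¹ * v ^ (-α) = (A * v ^ α)⁻¹ := by
        rw [Real.rpow_neg hv0.le, mul_inv]
      rw [e1, hg_def]
      apply inv_anti₀
      · have := hXpos v hv1; positivity
      · apply mul_le_mul_of_nonneg_left _ hA.le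
        apply Real.rpow_le_rpow (by nlinarith) (by nlinarith) hα0.le
    have hval : (∫ v in w..u₀, A⁻¹ * v ^ (-α))
        = A⁻¹ * ((w ^ (1-α) - u₀ ^ (1-α)) / (α - 1)) := by
      rw [intervalIntegral.integral_const_mul]
      rw [integral_rpow (Or.inr ⟨fun hc => absurd (neg_injective hc) (ne_of_gt hα1),
        fun hc => lt_irrefl _ (hsub w hw u₀ hu₀ hc).1⟩)]
      have h1 : -α + 1 = 1 - α := by ring
      have h2 : (1:ℝ) - α ≠ 0 := ne_of_lt (by linarith)
      have h3 : α - 1 ≠ 0 := ne_of_gt (by linarith)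
      rw [h1]
      congr 1
      rw [div_eq_div_iff h2 h3]
      ring
    linarith
  have htend0 : Tendsto (fun w : ℝ => w ^ (1-α)) (𝓝[>] (0:ℝ)) atTop := by
    have h1 : Tendsto (fun x : ℝ => (x⁻¹) ^ (α-1)) (𝓝[>] (0:ℝ)) atTop :=
      (tendsto_rpow_atTop (by linarith)).comp tendsto_inv_nhdsGT_zero
    apply h1.congr'
    filter_upwards [self_mem_nhdsWithin] with x hx
    rw [Real.inv_rpow (le_of_lt hx), ← Real.rpow_neg (le_of_lt hx)]
    norm_num
  have hlow : ∀ T : ℝ, ∃ w ∈ Set.Ioo (0:ℝ) 1, F w < T := by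
    intro T
    have htendB : Tendsto (fun w : ℝ => A⁻¹ * ((w ^ (1-α) - u₀ ^ (1-α)) / (α - 1)))
        (𝓝[>] (0:ℝ)) atTop := by
      apply Tendsto.const_mul_atTop (inv_pos.2 hA)
      apply Tendsto.atTop_div_const (by linarith : (0:ℝ) < α - 1)
      have := tendsto_atTop_add_const_right (𝓝[>] (0:ℝ)) (-(u₀ ^ (1-α))) htend0
      simpa [sub_eq_add_neg] using this
    have hev1 := htendB.eventually_gt_atTop (-T)
    have hev2 : ∀ᶠ w in 𝓝[>] (0:ℝ), w < u₀ := nhdsWithin_le_nhds (eventually_lt_nhds hu₀.1)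
    have hev3 : ∀ᶠ w in 𝓝[>] (0:ℝ), 0 < w := self_mem_nhdsWithin
    obtain ⟨w, hwb, hwlt, hw0⟩ := (hev1.and (hev2.and hev3)).exists
    have hwmem : w ∈ Set.Ioo (0:ℝ) 1 := ⟨hw0, lt_trans hwlt hu₀.2⟩
    refine ⟨w, hwmem, ?_⟩
    have := hlowbound w hwmem (le_of_lt hwlt)
    linarith
  -- upper divergence: F w → +∞ as w → 1⁻
  have hhighint : ∀ w ∈ Set.Ioo (0:ℝ) 1,
      IntervalIntegrable (fun v : ℝ => A⁻¹ * (1-v) ^ (-α)) volume u₀ w := by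
    intro w hw
    apply ContinuousOn.intervalIntegrable
    intro v hv
    have hv1 : v < 1 := (hsub u₀ hu₀ w hw hv).2
    have : ContinuousAt (fun v : ℝ => A⁻¹ * (1-v) ^ (-α)) v :=
      continuousAt_const.mul (((continuousAt_const.sub continuousAt_id).rpow_const
        (Or.inl (by intro hc; simp at hc; linarith))))
    exact this.continuousWithinAt
  have hhighbound : ∀ w ∈ Set.Ioo (0:ℝ) 1, u₀ ≤ w →
      A⁻¹ * (((1-w) ^ (1-α) - (1-u₀) ^ (1-α)) / (α - 1)) ≤ F w := by
    intro w hw hwu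
    have hmono : (∫ v in u₀..w, A⁻¹ * (1-v) ^ (-α)) ≤ ∫ v in u₀..w, g v := by
      apply intervalIntegral.integral_mono_on hwu (hhighint w hw) (hgint u₀ hu₀ w hw)
      intro v hv
      have hv1 : v ∈ Set.Ioo (0:ℝ) 1 := ⟨lt_of_lt_of_le hu₀.1 hv.1, lt_of_le_of_lt hv.2 hw.2⟩
      have hv0 : 0 < v := hv1.1
      have hv2 : v < 1 := hv1.2
      have e1 : A⁻¹ * (1-v) ^ (-α) = (A * (1-v) ^ α)⁻¹ := by
        rw [Real.rpow_neg (by linarith), mul_inv]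
      rw [e1, hg_def]
      apply inv_anti₀
      · have := hXpos v hv1; positivity
      · apply mul_le_mul_of_nonneg_left _ hA.le
        apply Real.rpow_le_rpow (by nlinarith) (by nlinarith) hα0.le
    have hval : (∫ v in u₀..w, A⁻¹ * (1-v) ^ (-α))
        = A⁻¹ * (((1-w) ^ (1-α) - (1-u₀) ^ (1-α)) / (α - 1)) := by
      rw [intervalIntegral.integral_const_mul]
      have hcs := intervalIntegral.integral_comp_sub_left (a := u₀) (b := w)
        (fun x : ℝ => x ^ (-α)) 1
      rw [hcs]
      rw [integral_rpow (Or.inr ⟨fun hc => absurd (neg_injective hc) (ne_of_gt hα1), by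
        intro hc
        rcases (Set.ordConnected_Ioo (a := (0:ℝ)) (b := 1)).uIcc_subset
          (show (1:ℝ) - w ∈ Set.Ioo (0:ℝ) 1 by constructor <;> [linarith [hw.2]; linarith [hw.1]])
          (show (1:ℝ) - u₀ ∈ Set.Ioo (0:ℝ) 1 by constructor <;> [linarith [hu₀.2]; linarith [hu₀.1]]) hc
          with ⟨h1, _⟩
        exact lt_irrefl _ h1⟩)]
      have h1 : -α + 1 = 1 - α := by ring
      have h2 : (1:ℝ) - α ≠ 0 := ne_of_lt (by linarith)
      have h3 : α - 1 ≠ 0 := ne_of_gt (by linarith)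
      rw [h1]
      congr 1
      rw [div_eq_div_iff h2 h3]
      ring
    linarith
  have hhigh : ∀ T : ℝ, ∃ w ∈ Set.Ioo (0:ℝ) 1, T < F w := by
    intro T
    have hmap : Tendsto (fun w : ℝ => 1 - w) (𝓝[<] (1:ℝ)) (𝓝[>] (0:ℝ)) := by
      rw [tendsto_nhdsWithin_iff]
      constructor
      · have h0 : Tendsto (fun w : ℝ => 1 - w) (𝓝 (1:ℝ)) (𝓝 (0:ℝ)) := by
          have hc : Continuous (fun w : ℝ => 1 - w) := continuous_const.sub continuous_id
          have := hc.tendsto (1:ℝ)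
          simpa using this
        exact h0.mono_left nhdsWithin_le_nhds
      · filter_upwards [self_mem_nhdsWithin] with x hx
        simp only [Set.mem_Iio] at hx
        simp only [Set.mem_Ioi]
        linarith
    have htend1 : Tendsto (fun w : ℝ => (1-w) ^ (1-α)) (𝓝[<] (1:ℝ)) atTop :=
      htend0.comp hmap
    have htendB : Tendsto (fun w : ℝ => A⁻¹ * (((1-w) ^ (1-α) - (1-u₀) ^ (1-α)) / (α - 1)))
        (𝓝[<] (1:ℝ)) atTop := by
      apply Tendsto.const_mul_atTop (inv_pos.2 hA)
      apply Tendsto.atTop_div_const (by linarith : (0:ℝ) < α - 1)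
      have := tendsto_atTop_add_const_right (𝓝[<] (1:ℝ)) (-((1-u₀) ^ (1-α))) htend1
      simpa [sub_eq_add_neg] using this
    have hev1 := htendB.eventually_gt_atTop T
    have hev2 : ∀ᶠ w in 𝓝[<] (1:ℝ), u₀ < w := nhdsWithin_le_nhds (eventually_gt_nhds hu₀.2)
    have hev3 : ∀ᶠ w in 𝓝[<] (1:ℝ), w < 1 := self_mem_nhdsWithin
    obtain ⟨w, hwb, hwgt, hw1⟩ := (hev1.and (hev2.and hev3)).exists
    have hwmem : w ∈ Set.Ioo (0:ℝ) 1 := ⟨lt_trans hu₀.1 hwgt, hw1⟩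
    refine ⟨w, hwmem, ?_⟩
    have := hhighbound w hwmem (le_of_lt hwgt)
    linarith
  have hex : ∀ t : ℝ, ∃ w, w ∈ Set.Ioo (0:ℝ) 1 ∧ F w = -t := by
    intro t
    obtain ⟨a, ha, hFa⟩ := hlow (-t)
    obtain ⟨b, hb, hFb⟩ := hhigh (-t)
    have hab : a < b := by
      by_contra hc
      push_neg at hc
      have := hFmono.monotoneOn hb ha hc
      linarith
    have hcont : ContinuousOn F (Set.Icc a b) := by
      intro x hx
      have hx' : x ∈ Set.Ioo (0:ℝ) 1 := ⟨lt_of_lt_of_le ha.1 hx.1, lt_of_le_of_lt hx.2 hb.2⟩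
      exact (hFderiv x hx').continuousAt.continuousWithinAt
    have hmem : -t ∈ Set.Icc (F a) (F b) := ⟨le_of_lt hFa, le_of_lt hFb⟩
    obtain ⟨w, hw, hFw⟩ := intermediate_value_Icc (le_of_lt hab) hcont hmem
    exact ⟨w, ⟨lt_of_lt_of_le ha.1 hw.1, lt_of_le_of_lt hw.2 hb.2⟩, hFw⟩
  set u : ℝ → ℝ := fun t => Classical.choose (hex t) with hu_def
  have huspec : ∀ t, u t ∈ Set.Ioo (0:ℝ) 1 ∧ F (u t) = -t := fun t => Classical.choose_spec (hex t)
  have humem : ∀ t, u t ∈ Set.Ioo (0:ℝ) 1 := fun t => (huspec t).1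
  have huF : ∀ t, F (u t) = -t := fun t => (huspec t).2
  have hinj := hFmono.injOn
  have hlt : ∀ {w t}, w ∈ Set.Ioo (0:ℝ) 1 → F w < -t → w < u t := by
    intro w t hw hFw
    by_contra hc
    push_neg at hc
    have := hFmono.monotoneOn (humem t) hw hc
    rw [huF t] at this
    linarith
  have hgt' : ∀ {w t}, w ∈ Set.Ioo (0:ℝ) 1 → -t < F w → u t < w := by
    intro w t hw hFw
    by_contra hc
    push_neg at hc
    have := hFmono.monotoneOn hw (humem t) hc
    rw [huF t] at this
    linarith
  have hu0 : u 0 = u₀ := by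
    apply hinj (humem 0) hu₀
    rw [huF 0, hF_def]
    simp
  have hucont : ∀ t, ContinuousAt u t := by
    intro t
    rw [ContinuousAt]
    apply tendsto_order.2
    constructor
    · intro w₁ hw₁
      rcases le_or_gt w₁ 0 with h0 | h0
      · exact Filter.Eventually.of_forall (fun y => lt_of_le_of_lt h0 (humem y).1)
      · have hw₁mem : w₁ ∈ Set.Ioo (0:ℝ) 1 := ⟨h0, lt_trans hw₁ (humem t).2⟩
        have hFlt : F w₁ < -t := by
          have := hFmono hw₁mem (humem t) hw₁
          rw [huF t] at this; exact this
        have hev : ∀ᶠ y in 𝓝 t, y < -F w₁ := eventually_lt_nhds (by linarith)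
        filter_upwards [hev] with y hy
        exact hlt hw₁mem (by linarith)
    · intro w₂ hw₂
      rcases le_or_gt 1 w₂ with h1 | h1
      · exact Filter.Eventually.of_forall (fun y => lt_of_lt_of_le (humem y).2 h1)
      · have hw₂mem : w₂ ∈ Set.Ioo (0:ℝ) 1 := ⟨lt_trans (humem t).1 hw₂, h1⟩
        have hFgt : -t < F w₂ := by
          have := hFmono (humem t) hw₂mem hw₂
          rw [huF t] at this; exact this
        have hev : ∀ᶠ y in 𝓝 t, -F w₂ < y := eventually_gt_nhds (by linarith)
        filter_upwards [hev] with y hy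
        exact hgt' hw₂mem (by linarith)
  have huderiv : ∀ t, HasDerivAt u (-(A * (u t * (1 - u t)) ^ α)) t := by
    intro t
    have hw := humem t
    have hd : HasDerivAt (fun w => -F w) (-(g (u t))) (u t) := (hFderiv _ hw).neg
    have hne : -(g (u t)) ≠ 0 := neg_ne_zero.2 (ne_of_gt (hgpos _ hw))
    have hfg : ∀ᶠ y in 𝓝 t, -F (u y) = y :=
      Filter.Eventually.of_forall (fun y => by rw [huF y, neg_neg])
    have hder := HasDerivAt.of_local_left_inverse (hucont t) hd hne hfg
    rw [show -(A * (u t * (1 - u t)) ^ α) = (-(g (u t)))⁻¹ by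
      rw [hg_def]
      simp only [inv_neg, inv_inv]]
    exact hder
  have hutop : Tendsto u atTop (𝓝 0) := by
    apply tendsto_order.2
    constructor
    · intro w₁ hw₁
      exact Filter.Eventually.of_forall (fun y => lt_trans hw₁ (humem y).1)
    · intro w₂ hw₂
      rcases le_or_gt 1 w₂ with h1 | h1
      · exact Filter.Eventually.of_forall (fun y => lt_of_lt_of_le (humem y).2 h1)
      · have hw₂mem : w₂ ∈ Set.Ioo (0:ℝ) 1 := ⟨hw₂, h1⟩
        filter_upwards [eventually_gt_atTop (-F w₂)] with y hy
        exact hgt' hw₂mem (by linarith)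
  have hubot : Tendsto u atBot (𝓝 1) := by
    apply tendsto_order.2
    constructor
    · intro w₁ hw₁
      rcases le_or_gt w₁ 0 with h0 | h0
      · exact Filter.Eventually.of_forall (fun y => lt_of_le_of_lt h0 (humem y).1)
      · have hw₁mem : w₁ ∈ Set.Ioo (0:ℝ) 1 := ⟨h0, hw₁⟩
        filter_upwards [eventually_lt_atBot (-F w₁)] with y hy
        exact hlt hw₁mem (by linarith)
    · intro w₂ hw₂
      exact Filter.Eventually.of_forall (fun y => lt_trans (humem y).2 hw₂)
  exact ⟨u, hu0, humem, huderiv, hutop, hubot⟩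

/-- For any initial data p₀ > 0 > q₀ there is a global solution
of ṗ = (1/(n−1))(p² + n p q), q̇ = (1/(n−1))(q² + n p q) with p(t) > 0 > q(t)
for all t and (p,q) → (0,0) as t → ±∞. -/
theorem global_two_phase_solution
    (n : ℕ) (hn : 2 ≤ n) (p₀ q₀ : ℝ) (h : p₀ > 0 ∧ q₀ < 0) :
    ∃ p q : ℝ → ℝ,
      p 0 = p₀ ∧ q 0 = q₀ ∧
      (∀ t : ℝ,
        HasDerivAt p ((1 / ((n:ℝ) - 1)) * ((p t) ^ 2 + (n:ℝ) * p t * q t)) t ∧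
        HasDerivAt q ((1 / ((n:ℝ) - 1)) * ((q t) ^ 2 + (n:ℝ) * p t * q t)) t) ∧
      (∀ t : ℝ, p t > 0 ∧ q t < 0) ∧
      Tendsto (fun t => (p t, q t)) atTop (𝓝 ((0:ℝ), (0:ℝ))) ∧
      Tendsto (fun t => (p t, q t)) atBot (𝓝 ((0:ℝ), (0:ℝ))) := by
  obtain ⟨hp₀, hq₀⟩ := h
  have hn2 : (2:ℝ) ≤ (n:ℝ) := by exact_mod_cast hn
  set m : ℝ := (n:ℝ) - 1 with hm_def
  have hm : 1 ≤ m := by rw [hm_def]; linarith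
  have hm0 : 0 < m := lt_of_lt_of_le one_pos hm
  set d₀ : ℝ := p₀ - q₀ with hd₀_def
  have hd₀ : 0 < d₀ := by rw [hd₀_def]; linarith
  set u₀ : ℝ := p₀ / d₀ with hu₀_def
  have hu₀ : u₀ ∈ Set.Ioo (0:ℝ) 1 := by
    constructor
    · rw [hu₀_def]; positivity
    · rw [hu₀_def, div_lt_one hd₀, hd₀_def]; linarith
  have hX₀ : 0 < u₀ * (1 - u₀) := by nlinarith [hu₀.1, hu₀.2]
  set A : ℝ := d₀ / (u₀ * (1 - u₀)) ^ ((1:ℝ)/m) with hA_def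
  have hYpos : 0 < (u₀ * (1 - u₀)) ^ ((1:ℝ)/m) := Real.rpow_pos_of_pos hX₀ _
  have hA : 0 < A := div_pos hd₀ hYpos
  obtain ⟨u, hu0, humem, huderiv, hutop, hubot⟩ := one_dim_sol m A u₀ hm hA hu₀
  set c : ℝ := 1/m with hc_def
  have hc0 : 0 < c := by rw [hc_def]; positivity
  set X : ℝ → ℝ := fun t => u t * (1 - u t) with hX_def
  have hXpos : ∀ t, 0 < X t := fun t => by
    have h1 := (humem t).1
    have h2 := (humem t).2
    simp only [hX_def]
    nlinarith
  set D : ℝ → ℝ := fun t => A * X t ^ c with hD_def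
  have hDpos : ∀ t, 0 < D t := fun t => by
    have h1 := Real.rpow_pos_of_pos (hXpos t) c
    simp only [hD_def]
    positivity
  have hD0 : D 0 = d₀ := by
    have hX0 : X 0 = u₀ * (1 - u₀) := by simp only [hX_def, hu0]
    simp only [hD_def, hX0, hA_def, hc_def]
    exact div_mul_cancel₀ d₀ (ne_of_gt hYpos)
  refine ⟨fun t => u t * D t, fun t => (u t - 1) * D t, ?_, ?_, ?_, ?_, ?_, ?_⟩
  · show u 0 * D 0 = p₀
    rw [hu0, hD0, hu₀_def]
    exact div_mul_cancel₀ p₀ (ne_of_gt hd₀)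
  · show (u 0 - 1) * D 0 = q₀
    rw [hu0, hD0, hu₀_def, hd₀_def]
    rw [sub_mul, div_mul_cancel₀ _ (ne_of_gt (show (0:ℝ) < p₀ - q₀ by linarith))]
    ring
  · intro t
    have hXt : X t = u t * (1 - u t) := rfl
    have hDt : D t = A * X t ^ c := rfl
    have hU : HasDerivAt u (-(A * X t ^ (1 + c))) t := huderiv t
    have hXd : HasDerivAt (fun s => u s * (1 - u s))
        (-(A * X t ^ (1 + c)) * (1 - u t) + u t * (0 - -(A * X t ^ (1 + c)))) t :=
      hU.mul ((hasDerivAt_const t 1).sub hU)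
    have hrp : HasDerivAt (fun s => (u s * (1 - u s)) ^ c)
        ((-(A * X t ^ (1 + c)) * (1 - u t) + u t * (0 - -(A * X t ^ (1 + c)))) * c
          * (u t * (1 - u t)) ^ (c - 1)) t :=
      hXd.rpow_const (Or.inl (by rw [← hXt]; exact ne_of_gt (hXpos t)))
    have hDd : HasDerivAt (fun s => A * (u s * (1 - u s)) ^ c)
        (A * ((-(A * X t ^ (1 + c)) * (1 - u t) + u t * (0 - -(A * X t ^ (1 + c)))) * c
          * (u t * (1 - u t)) ^ (c - 1))) t := hrp.const_mul A
    have hE1 : X t ^ (1 + c) = X t * X t ^ c := by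
      rw [Real.rpow_add (hXpos t), Real.rpow_one]
    have hE2 : X t ^ (c - 1) = X t ^ c / X t := by
      rw [Real.rpow_sub (hXpos t), Real.rpow_one]
    have hn' : (n:ℝ) = m + 1 := by rw [hm_def]; ring
    have hXne : X t ≠ 0 := ne_of_gt (hXpos t)
    have hmne : m ≠ 0 := ne_of_gt hm0
    have hcm : c * m = 1 := by rw [hc_def]; field_simp
    constructor
    · have hp' := hU.mul hDd
      have heq : -(A * X t ^ (1 + c)) * (A * (u t * (1 - u t)) ^ c)
            + u t * (A * ((-(A * X t ^ (1 + c)) * (1 - u t)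
              + u t * (0 - -(A * X t ^ (1 + c)))) * c * (u t * (1 - u t)) ^ (c - 1)))
          = 1 / m * ((u t * D t) ^ 2 + (n:ℝ) * (u t * D t) * ((u t - 1) * D t)) := by
        rw [← hXt, hE1, hE2, hn', hDt, hc_def]
        field_simp
        ring_nf
        rw [hXt]
        ring
      exact heq ▸ hp'
    · have hq' := (hU.sub (hasDerivAt_const t 1)).mul hDd
      have heq : (-(A * X t ^ (1 + c)) - 0) * (A * (u t * (1 - u t)) ^ c)
            + (u t - 1) * (A * ((-(A * X t ^ (1 + c)) * (1 - u t)
              + u t * (0 - -(A * X t ^ (1 + c)))) * c * (u t * (1 - u t)) ^ (c - 1)))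
          = 1 / m * (((u t - 1) * D t) ^ 2 + (n:ℝ) * (u t * D t) * ((u t - 1) * D t)) := by
        rw [← hXt, hE1, hE2, hn', hDt, hc_def]
        field_simp
        ring_nf
        rw [hXt]
        ring
      exact heq ▸ hq'
  · intro t
    constructor
    · exact mul_pos (humem t).1 (hDpos t)
    · exact mul_neg_of_neg_of_pos (by linarith [(humem t).2]) (hDpos t)
  · have hXtop : Tendsto X atTop (𝓝 0) := by
      have := hutop.mul ((tendsto_const_nhds : Tendsto (fun _ : ℝ => (1:ℝ)) atTop (𝓝 1)).sub hutop)
      simpa [hX_def] using this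
    have hrc : ContinuousAt (fun x : ℝ => x ^ c) 0 :=
      Real.continuousAt_rpow_const 0 c (Or.inr hc0.le)
    have hXc : Tendsto (fun t => X t ^ c) atTop (𝓝 0) := by
      have := hrc.tendsto.comp hXtop
      rwa [Real.zero_rpow (ne_of_gt hc0)] at this
    have hDtop : Tendsto D atTop (𝓝 0) := by
      have := hXc.const_mul A
      simpa [hD_def] using this
    have hp := hutop.mul hDtop
    have hq := (hutop.sub (tendsto_const_nhds : Tendsto (fun _ : ℝ => (1:ℝ)) atTop (𝓝 1))).mul hDtop
    simp only [mul_zero, zero_mul] at hp hq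
    exact hp.prodMk_nhds (by simpa using hq)
  · have hXbot : Tendsto X atBot (𝓝 0) := by
      have := hubot.mul ((tendsto_const_nhds : Tendsto (fun _ : ℝ => (1:ℝ)) atBot (𝓝 1)).sub hubot)
      simpa [hX_def] using this
    have hrc : ContinuousAt (fun x : ℝ => x ^ c) 0 :=
      Real.continuousAt_rpow_const 0 c (Or.inr hc0.le)
    have hXc : Tendsto (fun t => X t ^ c) atBot (𝓝 0) := by
      have := hrc.tendsto.comp hXbot
      rwa [Real.zero_rpow (ne_of_gt hc0)] at this
    have hDbot : Tendsto D atBot (𝓝 0) := by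
      have := hXc.const_mul A
      simpa [hD_def] using this
    have hp := hubot.mul hDbot
    have hq := (hubot.sub (tendsto_const_nhds : Tendsto (fun _ : ℝ => (1:ℝ)) atBot (𝓝 1))).mul hDbot
    simp only [mul_zero, zero_mul] at hp hq
    exact (by simpa using hp : Tendsto _ atBot (𝓝 (0:ℝ))).prodMk_nhds (by simpa using hq)
end

section
/- Suppose φ, ψ, p, q : [0,T) → ℝ satisfy the closure relation N(t) := φ p + (ψ − φ) q + (1 − ψ) p = 0 at t = 0 and the ODEs ṗ = p²/(n−1) + f, q̇ = q²/(n−1) + f, φ̇ = α + φ p, ψ̇ = α + φ p + (ψ − φ) q, where f = −(n/(n−1))(φ p² + (ψ−φ) q² + (1−ψ) p²). Then N satisfies Ṅ = −p N, hence N(t) = 0 for all t ∈ [0,T). -/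
open Real Filter Topology MeasureTheory Set intervalIntegral

/-- With N = φp + (ψ−φ)q + (1−ψ)p and the two-phase ODE system,
Ṅ = −pN, so N(0) = 0 implies N ≡ 0 on [0,T). -/
theorem closure_relation_preserved
    (n : ℕ) (hn : 2 ≤ n) (T : ℝ) (hT : 0 < T)
    (φ ψ p q α f : ℝ → ℝ)
    (hf : ∀ t, f t = -((n:ℝ) / ((n:ℝ) - 1))
      * (φ t * (p t) ^ 2 + (ψ t - φ t) * (q t) ^ 2 + (1 - ψ t) * (p t) ^ 2))
    (hp : ∀ t ∈ Ico (0:ℝ) T, HasDerivAt p ((p t) ^ 2 / ((n:ℝ) - 1) + f t) t)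
    (hq : ∀ t ∈ Ico (0:ℝ) T, HasDerivAt q ((q t) ^ 2 / ((n:ℝ) - 1) + f t) t)
    (hφ : ∀ t ∈ Ico (0:ℝ) T, HasDerivAt φ (α t + φ t * p t) t)
    (hψ : ∀ t ∈ Ico (0:ℝ) T,
      HasDerivAt ψ (α t + φ t * p t + (ψ t - φ t) * q t) t)
    (hN0 : φ 0 * p 0 + (ψ 0 - φ 0) * q 0 + (1 - ψ 0) * p 0 = 0) :
    (∀ t ∈ Ico (0:ℝ) T,
      HasDerivAt (fun s => φ s * p s + (ψ s - φ s) * q s + (1 - ψ s) * p s)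
        (-(p t) * (φ t * p t + (ψ t - φ t) * q t + (1 - ψ t) * p t)) t) ∧
    (∀ t ∈ Ico (0:ℝ) T,
      φ t * p t + (ψ t - φ t) * q t + (1 - ψ t) * p t = 0) := by
  have hn1 : ((n:ℝ) - 1) ≠ 0 := by
    have : (2:ℝ) ≤ (n:ℝ) := by exact_mod_cast hn
    linarith
  set N : ℝ → ℝ := fun s => φ s * p s + (ψ s - φ s) * q s + (1 - ψ s) * p s with hN
  have hderiv : ∀ t ∈ Ico (0:ℝ) T, HasDerivAt N (-(p t) * N t) t := by
    intro t ht
    have h := (((hφ t ht).mul (hp t ht)).add (((hψ t ht).sub (hφ t ht)).mul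
      (hq t ht))).add (((hasDerivAt_const t (1:ℝ)).sub (hψ t ht)).mul (hp t ht))
    refine h.congr_deriv ?_
    rw [hf t]
    simp only [Pi.sub_apply, hN]
    field_simp
    ring
  refine ⟨hderiv, ?_⟩
  intro t₀ ht₀
  obtain ⟨ht₀0, ht₀T⟩ := ht₀
  have hsub : Icc (0:ℝ) t₀ ⊆ Ico 0 T := fun s hs => ⟨hs.1, lt_of_le_of_lt hs.2 ht₀T⟩
  have hpc : ContinuousOn (fun s => |p s|) (Icc 0 t₀) := by
    intro s hs
    exact ((hp s (hsub hs)).differentiableAt.continuousAt.continuousWithinAt).abs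
  obtain ⟨x, -, hmax⟩ := (isCompact_Icc).exists_isMaxOn (nonempty_Icc.2 ht₀0) hpc
  set K := |p x| with hKdef
  have hK : ∀ s ∈ Icc (0:ℝ) t₀, |p s| ≤ K := fun s hs => hmax hs
  have key : ∀ s ∈ Icc (0:ℝ) t₀, ‖N s‖ ≤ gronwallBound 0 K 0 (s - 0) := by
    apply norm_le_gronwallBound_of_norm_deriv_right_le
    · intro s hs
      exact (hderiv s (hsub hs)).continuousAt.continuousWithinAt
    · intro s hs
      exact (hderiv s (hsub ⟨hs.1, le_of_lt hs.2⟩)).hasDerivWithinAt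
    · simpa [hN] using hN0
    · intro s hs
      have := hK s ⟨hs.1, le_of_lt hs.2⟩
      calc ‖-(p s) * N s‖ = |p s| * ‖N s‖ := by
            rw [norm_mul, norm_neg]; rfl
        _ ≤ K * ‖N s‖ + 0 := by
            have : |p s| * ‖N s‖ ≤ K * ‖N s‖ :=
              mul_le_mul_of_nonneg_right this (norm_nonneg _)
            linarith
  have := key t₀ ⟨ht₀0, le_refl _⟩
  rw [gronwallBound_ε0] at this
  simp at this
  simpa [hN] using this
end
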